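/- arXiv:2502.03988 — 10 statements merged into one kernel-verified Lean document; each statement's English description precedes it below -/
import Mathlib

section
/- Let (Ω, Σ, P) be a probability space, let a < b be extended reals, let f : (a,b) → ℝ be a twice differentiable convex function, and let X : Ω → (a,b) be a random variable such that X, f(X), f'(X), and X·f'(X) are all integrable. Then 0 ≤ E[f(X)] − f(E[X]) ≤ E[X·f'(X)] − E[X]·E[f'(X)]. -/
/-!
Both bounds come from the tangent-line inequality `f y + f' y (x - y) ≤ f x` of a convex
function. Taking the tangent at `E[X]` and integrating gives Jensen's inequality; taking the
tangent at `X` and evaluating at `E[X]` gives `f(X) + f'(X) (E[X] - X) ≤ f(E[X])`, whose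
expectation is the upper bound. Integrability of `X` alone puts `E[X]` in `(a,b)`, since `X`
lies both below and above its mean at some points.
-/

open MeasureTheory

theorem ConvexOn.add_mul_sub_le_of_hasDerivAt {s : Set ℝ} {f : ℝ → ℝ} {x y f'y : ℝ}
    (hf : ConvexOn ℝ s f) (hx : x ∈ s) (hy : y ∈ s) (hd : HasDerivAt f f'y y) :
    f y + f'y * (x - y) ≤ f x := by
  rcases lt_trichotomy x y with hxy | rfl | hxy
  · have := hf.slope_le_of_hasDerivAt hx hy hxy hd
    rw [slope_def_field, div_le_iff₀ (sub_pos.2 hxy)] at this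
    linarith
  · simp
  · have := hf.le_slope_of_hasDerivAt hy hx hxy hd
    rw [slope_def_field, le_div_iff₀ (sub_pos.2 hxy)] at this
    linarith

section

variable {Ω : Type*} [MeasurableSpace Ω] {P : Measure Ω} [IsProbabilityMeasure P] {X : Ω → ℝ}

theorem Set.OrdConnected.integral_mem {s : Set ℝ} (hs : s.OrdConnected)
    (hXs : ∀ᵐ ω ∂P, X ω ∈ s) (hX : Integrable X P) : ∫ ω, X ω ∂P ∈ s := by
  rw [ae_iff] at hXs
  obtain ⟨ω₁, hω₁s, hω₁⟩ := exists_notMem_null_le_integral hX hXs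
  obtain ⟨ω₂, hω₂s, hω₂⟩ := exists_notMem_null_integral_le hX hXs
  exact hs.out (not_not.1 hω₁s) (not_not.1 hω₂s) ⟨hω₁, hω₂⟩

variable {s : Set ℝ} {f f' : ℝ → ℝ}

theorem ConvexOn.map_integral_le_of_hasDerivAt {c : ℝ} (hf : ConvexOn ℝ s f)
    (hd : HasDerivAt f c (∫ ω, X ω ∂P))
    (hXs : ∀ᵐ ω ∂P, X ω ∈ s) (hX : Integrable X P) (hfX : Integrable (fun ω => f (X ω)) P) :
    f (∫ ω, X ω ∂P) ≤ ∫ ω, f (X ω) ∂P := by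
  set m := ∫ ω, X ω ∂P
  have hm : m ∈ s := hf.1.ordConnected.integral_mem hXs hX
  have htangent : ∀ᵐ ω ∂P, f m + c * (X ω - m) ≤ f (X ω) :=
    hXs.mono fun ω hω => hf.add_mul_sub_le_of_hasDerivAt hω hm hd
  have hlin : Integrable (fun ω => c * (X ω - m)) P := (hX.sub (integrable_const m)).const_mul _
  calc f m = ∫ ω, f m + c * (X ω - m) ∂P := by
        rw [integral_add (integrable_const _) hlin, integral_const_mul,
          integral_sub hX (integrable_const m)]
        simp [m]
    _ ≤ ∫ ω, f (X ω) ∂P := integral_mono_ae ((integrable_const _).add hlin) hfX htangent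

theorem ConvexOn.integral_map_sub_map_integral_le (hf : ConvexOn ℝ s f)
    (hd : ∀ x ∈ s, HasDerivAt f (f' x) x)
    (hXs : ∀ᵐ ω ∂P, X ω ∈ s) (hX : Integrable X P) (hfX : Integrable (fun ω => f (X ω)) P)
    (hf'X : Integrable (fun ω => f' (X ω)) P) (hXf'X : Integrable (fun ω => X ω * f' (X ω)) P) :
    ∫ ω, f (X ω) ∂P - f (∫ ω, X ω ∂P) ≤
      ∫ ω, X ω * f' (X ω) ∂P - (∫ ω, X ω ∂P) * ∫ ω, f' (X ω) ∂P := by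
  set m := ∫ ω, X ω ∂P
  have hm : m ∈ s := hf.1.ordConnected.integral_mem hXs hX
  have htangent : ∀ᵐ ω ∂P, f (X ω) + (m * f' (X ω) - X ω * f' (X ω)) ≤ f m :=
    hXs.mono fun ω hω => by
      linarith [hf.add_mul_sub_le_of_hasDerivAt hm hω (hd _ hω)]
  have hrem : Integrable (fun ω => m * f' (X ω) - X ω * f' (X ω)) P :=
    (hf'X.const_mul m).sub hXf'X
  have hintegrated := calc
    ∫ ω, f (X ω) ∂P + (m * ∫ ω, f' (X ω) ∂P - ∫ ω, X ω * f' (X ω) ∂P)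
        = ∫ ω, f (X ω) + (m * f' (X ω) - X ω * f' (X ω)) ∂P := by
          rw [integral_add hfX hrem, integral_sub (hf'X.const_mul m) hXf'X, integral_const_mul]
      _ ≤ ∫ _, f m ∂P := integral_mono_ae (hfX.add hrem) (integrable_const _) htangent
      _ = f m := by simp
  linarith

end

theorem jensen_gap_first_order_general
    {Ω : Type*} [MeasurableSpace Ω] (P : Measure Ω) [IsProbabilityMeasure P]
    (a b : EReal)
    (f f' : ℝ → ℝ)
    (hconv : ConvexOn ℝ {x : ℝ | a < (x : EReal) ∧ (x : EReal) < b} f)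
    (hderiv : ∀ x : ℝ, a < (x : EReal) → (x : EReal) < b → HasDerivAt f (f' x) x)
    (X : Ω → ℝ)
    (hX : ∀ ω, a < (X ω : EReal) ∧ (X ω : EReal) < b)
    (hXint : Integrable X P)
    (hfXint : Integrable (fun ω => f (X ω)) P)
    (hf'Xint : Integrable (fun ω => f' (X ω)) P)
    (hXf'Xint : Integrable (fun ω => X ω * f' (X ω)) P) :
    0 ≤ (∫ ω, f (X ω) ∂P) - f (∫ ω, X ω ∂P) ∧
      (∫ ω, f (X ω) ∂P) - f (∫ ω, X ω ∂P) ≤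
        (∫ ω, X ω * f' (X ω) ∂P) - (∫ ω, X ω ∂P) * (∫ ω, f' (X ω) ∂P) := by
  have hXs := ae_of_all P hX
  have hmean := hconv.1.ordConnected.integral_mem hXs hXint
  refine ⟨sub_nonneg.2 ?_, ?_⟩
  · exact hconv.map_integral_le_of_hasDerivAt (hderiv _ hmean.1 hmean.2) hXs hXint hfXint
  · exact hconv.integral_map_sub_map_integral_le (fun x hx => hderiv x hx.1 hx.2) hXs hXint
      hfXint hf'Xint hXf'Xint

/-- Let `(Ω, Σ, P)` be a probability space, let `a < b` be extended reals,
let `f : (a,b) → ℝ` be a twice differentiable convex function, and let `X : Ω → (a,b)` be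
a random variable such that `X`, `f(X)`, `f'(X)` and `X·f'(X)` are integrable. Then
`0 ≤ E[f(X)] − f(E[X]) ≤ E[X·f'(X)] − E[X]·E[f'(X)]`. -/
theorem jensen_gap_first_order
    {Ω : Type*} [MeasurableSpace Ω] (P : Measure Ω) [IsProbabilityMeasure P]
    (a b : EReal) (hab : a < b)
    (f f' f'' : ℝ → ℝ)
    (hconv : ConvexOn ℝ {x : ℝ | a < (x : EReal) ∧ (x : EReal) < b} f)
    (hderiv : ∀ x : ℝ, a < (x : EReal) → (x : EReal) < b → HasDerivAt f (f' x) x)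
    (hderiv2 : ∀ x : ℝ, a < (x : EReal) → (x : EReal) < b → HasDerivAt f' (f'' x) x)
    (X : Ω → ℝ)
    (hX : ∀ ω, a < (X ω : EReal) ∧ (X ω : EReal) < b)
    (hXint : Integrable X P)
    (hfXint : Integrable (fun ω => f (X ω)) P)
    (hf'Xint : Integrable (fun ω => f' (X ω)) P)
    (hXf'Xint : Integrable (fun ω => X ω * f' (X ω)) P) :
    0 ≤ (∫ ω, f (X ω) ∂P) - f (∫ ω, X ω ∂P) ∧
      (∫ ω, f (X ω) ∂P) - f (∫ ω, X ω ∂P) ≤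
        (∫ ω, X ω * f' (X ω) ∂P) - (∫ ω, X ω ∂P) * (∫ ω, f' (X ω) ∂P) :=
  jensen_gap_first_order_general P a b f f' hconv hderiv X hX hXint hfXint hf'Xint hXf'Xint
end

section
/- Let (Ω, Σ, P) be a probability space, let k be a positive integer, let f : (a,b) → ℝ be a 2k-times differentiable function with f^(2k)(x) ≥ 0 for every x ∈ (a,b), and let X : Ω → (a,b) be an integrable random variable such that f(X) and (X − E[X])^i are integrable for 1 ≤ i ≤ 2k−1. Then ∑_{i=1}^{2k−1} (1/i!) · f^(i)(E[X]) · E[(X − E[X])^i] ≤ E[f(X)] − f(E[X]). -/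
/-! The Taylor remainder `R` of `f` of order `2k - 1` at `μ = E[X]` vanishes at `μ` together with
its first `2k - 1` derivatives, and `R⁽²ᵏ⁾ = f⁽²ᵏ⁾ ≥ 0`. Going down two derivatives at a time, each
`R⁽²ʲ⁾` is convex with a critical point at `μ`, hence nonnegative, so `f(x) - f(μ)` dominates the
Taylor sum on `(a, b)`. As `E[X] ∈ (a, b)`, taking expectations gives the inequality. -/

open MeasureTheory Finset
open scoped Nat

section Convex

variable {S : Set ℝ} {f : ℝ → ℝ} {c : ℝ}

theorem ConvexOn.isMinOn_of_hasDerivAt_eq_zero (hf : ConvexOn ℝ S f) (hc : c ∈ S)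
    (hf' : HasDerivAt f 0 c) : IsMinOn f S c := by
  intro y hy
  change f c ≤ f y
  rcases lt_trichotomy c y with hcy | rfl | hyc
  · have := hf.le_slope_of_hasDerivAt hc hy hcy hf'
    rw [slope_def_field, le_div_iff₀ (sub_pos.2 hcy)] at this
    linarith
  · exact le_rfl
  · have := hf.slope_le_of_hasDerivAt hy hc hyc hf'
    rw [slope_def_field, div_le_iff₀ (sub_pos.2 hyc)] at this
    linarith

theorem convexOn_of_hasDerivAt2_nonneg (hS : Convex ℝ S) {f' f'' : ℝ → ℝ}
    (hf : ∀ x ∈ S, HasDerivAt f (f' x) x) (hf' : ∀ x ∈ S, HasDerivAt f' (f'' x) x)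
    (hf'' : ∀ x ∈ S, 0 ≤ f'' x) : ConvexOn ℝ S f :=
  convexOn_of_hasDerivWithinAt2_nonneg hS
    (fun x hx => (hf x hx).continuousAt.continuousWithinAt)
    (fun x hx => (hf x (interior_subset hx)).hasDerivWithinAt)
    (fun x hx => (hf' x (interior_subset hx)).hasDerivWithinAt)
    (fun x hx => hf'' x (interior_subset hx))

theorem nonneg_of_hasDerivAt_of_even_deriv_nonneg (hS : Convex ℝ S) (hc : c ∈ S)
    {g : ℕ → ℝ → ℝ} (n : ℕ)
    (hg : ∀ i < 2 * n, ∀ x ∈ S, HasDerivAt (g i) (g (i + 1) x) x)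
    (hgc : ∀ i < 2 * n, g i c = 0) (hg2n : ∀ x ∈ S, 0 ≤ g (2 * n) x) :
    ∀ x ∈ S, 0 ≤ g 0 x := by
  induction n with
  | zero => simpa using hg2n
  | succ m ih =>
    refine ih (fun i hi => hg i (by omega)) (fun i hi => hgc i (by omega)) fun x hx => ?_
    have hconv : ConvexOn ℝ S (g (2 * m)) :=
      convexOn_of_hasDerivAt2_nonneg hS (hg (2 * m) (by omega)) (hg (2 * m + 1) (by omega)) hg2n
    have hmin := hconv.isMinOn_of_hasDerivAt_eq_zero hc
      (hgc (2 * m + 1) (by omega) ▸ hg (2 * m) (by omega) c hc) hx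
    simpa [hgc (2 * m) (by omega)] using hmin

end Convex

/-- With `fd i` standing for the `i`-th derivative, the remainder of the Taylor polynomial of
`fd i` at `c` of degree `n - 1 - i`. -/
noncomputable def taylorRemainder (fd : ℕ → ℝ → ℝ) (n : ℕ) (c : ℝ) (i : ℕ) (x : ℝ) : ℝ :=
  fd i x - ∑ j ∈ range (n - i), fd (i + j) c / j ! * (x - c) ^ j

namespace taylorRemainder

variable {fd : ℕ → ℝ → ℝ} {n i : ℕ} {c : ℝ}

theorem apply_of_le (hni : n ≤ i) (x : ℝ) : taylorRemainder fd n c i x = fd i x := by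
  simp [taylorRemainder, Nat.sub_eq_zero_of_le hni]

theorem apply_self (hi : i < n) : taylorRemainder fd n c i c = 0 := by
  rw [taylorRemainder, show n - i = n - (i + 1) + 1 by omega, sum_range_succ']
  simp

theorem hasDerivAt (hi : i < n) {x : ℝ} (hfd : HasDerivAt (fd i) (fd (i + 1) x) x) :
    HasDerivAt (taylorRemainder fd n c i) (taylorRemainder fd n c (i + 1) x) x := by
  have hpoly : HasDerivAt (fun y => ∑ j ∈ range (n - i), fd (i + j) c / j ! * (y - c) ^ j)
      (∑ j ∈ range (n - i), fd (i + j) c / j ! * (j * (x - c) ^ (j - 1))) x :=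
    HasDerivAt.fun_sum fun j _ => by
      simpa using (((hasDerivAt_id x).sub_const c).fun_pow j).const_mul (fd (i + j) c / j !)
  refine (hfd.fun_sub hpoly).congr_deriv ?_
  rw [taylorRemainder, show n - i = n - (i + 1) + 1 by omega, sum_range_succ']
  simp only [CharP.cast_eq_zero, zero_mul, mul_zero, add_zero]
  congr 1
  refine sum_congr rfl fun j _ => ?_
  rw [Nat.factorial_succ, Nat.add_sub_cancel, add_right_comm, ← add_assoc]
  push_cast
  field_simp

end taylorRemainder

theorem sum_taylor_le_of_even_deriv_nonneg {S : Set ℝ} (hS : Convex ℝ S) {c : ℝ} (hc : c ∈ S)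
    {fd : ℕ → ℝ → ℝ} (n : ℕ)
    (hfd : ∀ i < 2 * n, ∀ x ∈ S, HasDerivAt (fd i) (fd (i + 1) x) x)
    (h2n : ∀ x ∈ S, 0 ≤ fd (2 * n) x) {x : ℝ} (hx : x ∈ S) :
    ∑ j ∈ range (2 * n), fd j c / j ! * (x - c) ^ j ≤ fd 0 x := by
  have h := nonneg_of_hasDerivAt_of_even_deriv_nonneg hS hc (g := taylorRemainder fd (2 * n) c) n
    (fun i hi y hy => taylorRemainder.hasDerivAt hi (hfd i hi y hy))
    (fun i hi => taylorRemainder.apply_self hi)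
    (fun y hy => (taylorRemainder.apply_of_le le_rfl y).symm ▸ h2n y hy) x hx
  simpa [taylorRemainder] using h

section Integral

variable {Ω : Type*} [MeasurableSpace Ω] {P : Measure Ω} [IsProbabilityMeasure P] {X : Ω → ℝ}

theorem lt_integral_of_forall_lt (hX : Integrable X P) {r : ℝ} (h : ∀ ω, r < X ω) :
    r < ∫ ω, X ω ∂P := by
  have hpos : 0 < ∫ ω, (X ω - r) ∂P := by
    rw [integral_pos_iff_support_of_nonneg (fun ω => sub_nonneg.2 (h ω).le)
      (hX.sub (integrable_const r))]
    simp [Function.support, sub_ne_zero, (h _).ne']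
  simpa [integral_sub hX (integrable_const r)] using hpos

theorem EReal.lt_integral_of_forall_lt (hX : Integrable X P) {a : EReal}
    (h : ∀ ω, a < X ω) : a < ((∫ ω, X ω ∂P : ℝ) : EReal) := by
  induction a with
  | bot => exact EReal.bot_lt_coe _
  | coe r =>
    exact EReal.coe_lt_coe_iff.2
      (_root_.lt_integral_of_forall_lt hX fun ω => EReal.coe_lt_coe_iff.1 (h ω))
  | top => exact absurd (h (nonempty_of_isProbabilityMeasure P).some) not_top_lt

theorem EReal.integral_lt_of_forall_lt (hX : Integrable X P) {b : EReal}
    (h : ∀ ω, (X ω : EReal) < b) : ((∫ ω, X ω ∂P : ℝ) : EReal) < b := by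
  have := EReal.lt_integral_of_forall_lt (X := fun ω => -X ω) hX.neg (a := -b) fun ω => by
    simpa using EReal.neg_lt_neg_iff.2 (h ω)
  rw [integral_neg, EReal.coe_neg] at this
  exact EReal.neg_lt_neg_iff.1 this

end Integral

theorem jensen_gap_higher_order_lower_general
    {Ω : Type*} [MeasurableSpace Ω] (P : Measure Ω) [IsProbabilityMeasure P]
    (a b : EReal) (k : ℕ) (hk : 0 < k)
    (f : ℝ → ℝ) (fd : ℕ → ℝ → ℝ) (hfd0 : fd 0 = f)
    (hderiv : ∀ i < 2 * k, ∀ x : ℝ, a < (x : EReal) → (x : EReal) < b →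
      HasDerivAt (fd i) (fd (i + 1) x) x)
    (hnonneg : ∀ x : ℝ, a < (x : EReal) → (x : EReal) < b → 0 ≤ fd (2 * k) x)
    (X : Ω → ℝ)
    (hX : ∀ ω, a < (X ω : EReal) ∧ (X ω : EReal) < b)
    (hXint : Integrable X P)
    (hfXint : Integrable (fun ω => f (X ω)) P)
    (hmom : ∀ i ∈ Finset.Icc 1 (2 * k - 1),
      Integrable (fun ω => (X ω - ∫ ω', X ω' ∂P) ^ i) P) :
    ∑ i ∈ Finset.Icc 1 (2 * k - 1),
        (1 / (Nat.factorial i : ℝ)) * fd i (∫ ω, X ω ∂P) *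
          (∫ ω, (X ω - ∫ ω', X ω' ∂P) ^ i ∂P)
      ≤ (∫ ω, f (X ω) ∂P) - f (∫ ω, X ω ∂P) := by
  set μ := ∫ ω, X ω ∂P
  set S : Set ℝ := Real.toEReal ⁻¹' Set.Ioo a b
  have hS : Convex ℝ S := (Set.ordConnected_Ioo.preimage_mono EReal.coe_strictMono.monotone).convex
  have hμ : μ ∈ S := ⟨EReal.lt_integral_of_forall_lt hXint fun ω => (hX ω).1,
    EReal.integral_lt_of_forall_lt hXint fun ω => (hX ω).2⟩
  have hIcc : Icc 1 (2 * k - 1) = Ico 1 (2 * k) :=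
    Icc_sub_one_right_eq_Ico_of_not_isMin (not_isMin_of_lt (by omega : 0 < 2 * k)) 1
  have htaylor : ∀ ω, ∑ i ∈ Icc 1 (2 * k - 1), fd i μ / i ! * (X ω - μ) ^ i ≤ f (X ω) - f μ := by
    intro ω
    have := sum_taylor_le_of_even_deriv_nonneg hS hμ k (fun i hi x hx => hderiv i hi x hx.1 hx.2)
      (fun x hx => hnonneg x hx.1 hx.2) (hX ω)
    rw [sum_range_eq_add_Ico _ (by omega), ← hIcc, hfd0] at this
    simp only [Nat.factorial_zero, Nat.cast_one, div_one, pow_zero, mul_one] at this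
    linarith
  calc ∑ i ∈ Icc 1 (2 * k - 1), 1 / (i ! : ℝ) * fd i μ * ∫ ω, (X ω - μ) ^ i ∂P
      = ∫ ω, ∑ i ∈ Icc 1 (2 * k - 1), fd i μ / i ! * (X ω - μ) ^ i ∂P := by
        rw [integral_finsetSum _ fun i hi => (hmom i hi).const_mul _]
        refine sum_congr rfl fun i _ => ?_
        rw [integral_const_mul]
        ring
    _ ≤ ∫ ω, (f (X ω) - f μ) ∂P :=
        integral_mono (integrable_finsetSum _ fun i hi => (hmom i hi).const_mul _)
          (hfXint.sub (integrable_const _)) htaylor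
    _ = (∫ ω, f (X ω) ∂P) - f μ := by simp [integral_sub hfXint (integrable_const _)]

/-- Let `k ≥ 1`, let `f : (a,b) → ℝ` be a `2k`-times differentiable function
(with `i`-th derivative `fd i`, `fd 0 = f`) such that `f^{(2k)}(x) ≥ 0` on `(a,b)`, and let
`X : Ω → (a,b)` be an integrable random variable such that `f(X)` and `(X − E[X])^i`
(`1 ≤ i ≤ 2k−1`) are integrable. Then
`∑_{i=1}^{2k−1} (1/i!)·f^{(i)}(E[X])·E[(X − E[X])^i] ≤ E[f(X)] − f(E[X])`. -/
theorem jensen_gap_higher_order_lower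
    {Ω : Type*} [MeasurableSpace Ω] (P : Measure Ω) [IsProbabilityMeasure P]
    (a b : EReal) (hab : a < b) (k : ℕ) (hk : 0 < k)
    (f : ℝ → ℝ) (fd : ℕ → ℝ → ℝ) (hfd0 : fd 0 = f)
    (hderiv : ∀ i < 2 * k, ∀ x : ℝ, a < (x : EReal) → (x : EReal) < b →
      HasDerivAt (fd i) (fd (i + 1) x) x)
    (hnonneg : ∀ x : ℝ, a < (x : EReal) → (x : EReal) < b → 0 ≤ fd (2 * k) x)
    (X : Ω → ℝ)
    (hX : ∀ ω, a < (X ω : EReal) ∧ (X ω : EReal) < b)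
    (hXint : Integrable X P)
    (hfXint : Integrable (fun ω => f (X ω)) P)
    (hmom : ∀ i ∈ Finset.Icc 1 (2 * k - 1),
      Integrable (fun ω => (X ω - ∫ ω', X ω' ∂P) ^ i) P) :
    ∑ i ∈ Finset.Icc 1 (2 * k - 1),
        (1 / (Nat.factorial i : ℝ)) * fd i (∫ ω, X ω ∂P) *
          (∫ ω, (X ω - ∫ ω', X ω' ∂P) ^ i ∂P)
      ≤ (∫ ω, f (X ω) ∂P) - f (∫ ω, X ω ∂P) :=
  jensen_gap_higher_order_lower_general P a b k hk f fd hfd0 hderiv hnonneg X hX hXint hfXint hmom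
end

section
/- Let (Ω, Σ, P) be a probability space, let k be a positive integer, let f : (a,b) → ℝ be a 2k-times differentiable function with f^(2k)(x) ≥ 0 for every x ∈ (a,b), where 0 ∈ (a,b), and let X : Ω → (a,b) be an integrable random variable with E[X] = 0 such that f(X), X^i, and f^(i)(X)·X^i are integrable for 1 ≤ i ≤ 2k−1. Then ∑_{i=1}^{2k−1} (1/i!) · f^(i)(0) · E[X^i] ≤ E[f(X)] − f(0) ≤ −∑_{i=1}^{2k−1} ((−1)^i / i!) · E[f^(i)(X)·X^i]. -/
open MeasureTheory Finset
open scoped Nat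

/-!
Since `f⁽²ᵏ⁾ ≥ 0` and `2k` is even, the Lagrange remainder of the Taylor expansion of order
`2k - 1` is nonnegative on both sides of the centre, so `f` lies above each of its Taylor
polynomials of degree `2k - 1`. Expanding about `0` and evaluating at `X`, resp. expanding about
`X` and evaluating at `0`, and integrating gives the two bounds.
-/

section TaylorLowerBound

variable {n : ℕ} {fd : ℕ → ℝ → ℝ} {s : Set ℝ}

theorem iteratedDerivWithin_eqOn_of_hasDerivWithinAt (hs : UniqueDiffOn ℝ s)
    (hderiv : ∀ i < n, ∀ x ∈ s, HasDerivWithinAt (fd i) (fd (i + 1) x) s x) :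
    ∀ i ≤ n, Set.EqOn (iteratedDerivWithin i (fd 0) s) (fd i) s := by
  intro i
  induction i with
  | zero => intro _ x _; simp
  | succ i ih =>
    intro hi x hx
    rw [iteratedDerivWithin_succ, derivWithin_congr (ih (by omega)) (ih (by omega) hx)]
    exact (hderiv i (by omega) x hx).derivWithin (hs x hx)

theorem sum_taylor_le_of_even_of_nonneg (hev : Even n) (hs : s.OrdConnected)
    (hderiv : ∀ i < n, ∀ x ∈ s, HasDerivWithinAt (fd i) (fd (i + 1) x) s x)
    (hnonneg : ∀ x ∈ s, 0 ≤ fd n x) {x₀ x : ℝ} (hx₀ : x₀ ∈ s) (hx : x ∈ s) :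
    ∑ i ∈ range n, (x - x₀) ^ i / (i ! : ℝ) * fd i x₀ ≤ fd 0 x := by
  rcases n with _ | m
  · simpa using hnonneg x hx
  rcases eq_or_ne x₀ x with rfl | hne
  · simp [sum_range_succ']
  set u := Set.uIcc x₀ x
  have hus : u ⊆ s := hs.uIcc_subset hx₀ hx
  have hderiv_u : ∀ i < m + 1, ∀ y ∈ u, HasDerivWithinAt (fd i) (fd (i + 1) y) u y :=
    fun i hi y hy => (hderiv i hi y (hus hy)).mono hus
  have heq := iteratedDerivWithin_eqOn_of_hasDerivWithinAt (uniqueDiffOn_uIcc hne) hderiv_u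
  have hdiff : ∀ i < m + 1, DifferentiableOn ℝ (iteratedDerivWithin i (fd 0) u) u :=
    fun i hi => DifferentiableOn.congr (fun y hy => (hderiv_u i hi y hy).differentiableWithinAt)
      (heq i hi.le)
  have hf : ContDiffOn ℝ m (fd 0) u :=
    contDiffOn_of_differentiableOn_deriv fun i hi => hdiff i (Nat.lt_succ_of_le (mod_cast hi))
  obtain ⟨ξ, hξ, hrem⟩ :=
    taylor_mean_remainder_lagrange hne hf ((hdiff m m.lt_succ_self).mono Set.uIoo_subset_uIcc_self)
  have hpoly : taylorWithinEval (fd 0) m u x₀ x =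
      ∑ i ∈ range (m + 1), (x - x₀) ^ i / (i ! : ℝ) * fd i x₀ := by
    rw [taylor_within_apply]
    refine sum_congr rfl fun i hi => ?_
    rw [heq i (mem_range.mp hi).le Set.left_mem_uIcc, smul_eq_mul]
    ring
  have hremainder_nonneg :
      0 ≤ iteratedDerivWithin (m + 1) (fd 0) u ξ * (x - x₀) ^ (m + 1) / (m + 1)! := by
    rw [heq (m + 1) le_rfl (Set.uIoo_subset_uIcc_self hξ)]
    have := hnonneg ξ (hus (Set.uIoo_subset_uIcc_self hξ))
    have := hev.pow_nonneg (x - x₀)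
    positivity
  linarith

end TaylorLowerBound

theorem integral_add_sum_integral_le {Ω ι : Type*} [MeasurableSpace Ω] {P : Measure Ω}
    {t : Finset ι} {F G : Ω → ℝ} {g : ι → Ω → ℝ} (hF : Integrable F P)
    (hG : Integrable G P) (hg : ∀ i ∈ t, Integrable (g i) P)
    (h : ∀ ω, F ω + ∑ i ∈ t, g i ω ≤ G ω) :
    ∫ ω, F ω ∂P + ∑ i ∈ t, ∫ ω, g i ω ∂P ≤ ∫ ω, G ω ∂P := by
  rw [← integral_finsetSum t hg, ← integral_add hF (integrable_finsetSum t hg)]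
  exact integral_mono (hF.add (integrable_finsetSum t hg)) hG h

theorem sum_range_eq_add_sum_Icc {M : Type*} [AddCommMonoid M] (g : ℕ → M) {n : ℕ}
    (hn : 0 < n) :
    ∑ i ∈ range n, g i = g 0 + ∑ i ∈ Icc 1 (n - 1), g i := by
  rw [sum_range_eq_add_Ico g hn, ← Ico_add_one_right_eq_Icc,
    Nat.sub_add_cancel (Nat.one_le_of_lt hn)]

theorem jensen_gap_higher_order_zero_mean_general
    {Ω : Type*} [MeasurableSpace Ω] (P : Measure Ω) [IsProbabilityMeasure P]
    (a b : EReal) (ha0 : a < ((0 : ℝ) : EReal)) (h0b : ((0 : ℝ) : EReal) < b)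
    (k : ℕ) (hk : 0 < k)
    (f : ℝ → ℝ) (fd : ℕ → ℝ → ℝ) (hfd0 : fd 0 = f)
    (hderiv : ∀ i < 2 * k, ∀ x : ℝ, a < (x : EReal) → (x : EReal) < b →
      HasDerivAt (fd i) (fd (i + 1) x) x)
    (hnonneg : ∀ x : ℝ, a < (x : EReal) → (x : EReal) < b → 0 ≤ fd (2 * k) x)
    (X : Ω → ℝ)
    (hX : ∀ ω, a < (X ω : EReal) ∧ (X ω : EReal) < b)
    (hfXint : Integrable (fun ω => f (X ω)) P)
    (hmom : ∀ i ∈ Finset.Icc 1 (2 * k - 1), Integrable (fun ω => X ω ^ i) P)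
    (hmom' : ∀ i ∈ Finset.Icc 1 (2 * k - 1),
      Integrable (fun ω => fd i (X ω) * X ω ^ i) P) :
    ∑ i ∈ Finset.Icc 1 (2 * k - 1),
        (1 / (Nat.factorial i : ℝ)) * fd i 0 * (∫ ω, X ω ^ i ∂P)
      ≤ (∫ ω, f (X ω) ∂P) - f 0 ∧
    (∫ ω, f (X ω) ∂P) - f 0
      ≤ -∑ i ∈ Finset.Icc 1 (2 * k - 1),
          ((-1 : ℝ) ^ i / (Nat.factorial i : ℝ)) *
            (∫ ω, fd i (X ω) * X ω ^ i ∂P) := by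
  set s : Set ℝ := (↑) ⁻¹' Set.Ioo a b
  have hs : s.OrdConnected := Set.ordConnected_Ioo.preimage_mono fun _ _ => EReal.coe_le_coe
  have htaylor {x₀ x : ℝ} (hx₀ : x₀ ∈ s) (hx : x ∈ s) :=
    sum_taylor_le_of_even_of_nonneg (even_two_mul k) hs
      (fun i hi y hy => (hderiv i hi y hy.1 hy.2).hasDerivWithinAt)
      (fun y hy => hnonneg y hy.1 hy.2) hx₀ hx
  have h0 : (0 : ℝ) ∈ s := ⟨ha0, h0b⟩
  have hn : 0 < 2 * k := by omega
  rw [← hfd0]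
  constructor
  · have := integral_add_sum_integral_le (integrable_const (fd 0 0)) (hfd0 ▸ hfXint)
      (fun i hi => (hmom i hi).const_mul (1 / (i ! : ℝ) * fd i 0)) fun ω => by
        have := htaylor h0 (hX ω)
        rw [sum_range_eq_add_sum_Icc _ hn] at this
        refine Eq.trans_le ?_ this
        simp only [sub_zero, pow_zero, Nat.factorial_zero, Nat.cast_one, div_one, one_mul]
        congr 1
        exact sum_congr rfl fun i _ => by ring
    simp only [integral_const, probReal_univ, one_smul, integral_const_mul] at this
    linarith
  · have := integral_add_sum_integral_le (hfd0 ▸ hfXint) (integrable_const (fd 0 0))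
      (fun i hi => (hmom' i hi).const_mul ((-1 : ℝ) ^ i / (i ! : ℝ))) fun ω => by
        have := htaylor (hX ω) h0
        rw [sum_range_eq_add_sum_Icc _ hn] at this
        refine Eq.trans_le ?_ this
        simp only [zero_sub, pow_zero, Nat.factorial_zero, Nat.cast_one, div_one, one_mul]
        congr 1
        exact sum_congr rfl fun i _ => by rw [neg_pow]; ring
    simp only [integral_const, probReal_univ, one_smul, integral_const_mul] at this
    linarith

/-- Let `k ≥ 1`, let `f : (a,b) → ℝ` be a `2k`-times differentiable function
(with `i`-th derivative `fd i`, `fd 0 = f`) such that `f^{(2k)}(x) ≥ 0` on `(a,b)`, where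
`0 ∈ (a,b)`, and let `X : Ω → (a,b)` be an integrable random variable with `E[X] = 0` such that
`f(X)`, `X^i` and `f^{(i)}(X)·X^i` (`1 ≤ i ≤ 2k−1`) are integrable. Then
`∑_{i=1}^{2k−1} (1/i!)·f^{(i)}(0)·E[X^i] ≤ E[f(X)] − f(0)
  ≤ −∑_{i=1}^{2k−1} ((−1)^i/i!)·E[f^{(i)}(X)·X^i]`. -/
theorem jensen_gap_higher_order_zero_mean
    {Ω : Type*} [MeasurableSpace Ω] (P : Measure Ω) [IsProbabilityMeasure P]
    (a b : EReal) (hab : a < b) (ha0 : a < ((0 : ℝ) : EReal)) (h0b : ((0 : ℝ) : EReal) < b)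
    (k : ℕ) (hk : 0 < k)
    (f : ℝ → ℝ) (fd : ℕ → ℝ → ℝ) (hfd0 : fd 0 = f)
    (hderiv : ∀ i < 2 * k, ∀ x : ℝ, a < (x : EReal) → (x : EReal) < b →
      HasDerivAt (fd i) (fd (i + 1) x) x)
    (hnonneg : ∀ x : ℝ, a < (x : EReal) → (x : EReal) < b → 0 ≤ fd (2 * k) x)
    (X : Ω → ℝ)
    (hX : ∀ ω, a < (X ω : EReal) ∧ (X ω : EReal) < b)
    (hXint : Integrable X P)
    (hEX : (∫ ω, X ω ∂P) = 0)
    (hfXint : Integrable (fun ω => f (X ω)) P)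
    (hmom : ∀ i ∈ Finset.Icc 1 (2 * k - 1), Integrable (fun ω => X ω ^ i) P)
    (hmom' : ∀ i ∈ Finset.Icc 1 (2 * k - 1),
      Integrable (fun ω => fd i (X ω) * X ω ^ i) P) :
    ∑ i ∈ Finset.Icc 1 (2 * k - 1),
        (1 / (Nat.factorial i : ℝ)) * fd i 0 * (∫ ω, X ω ^ i ∂P)
      ≤ (∫ ω, f (X ω) ∂P) - f 0 ∧
    (∫ ω, f (X ω) ∂P) - f 0
      ≤ -∑ i ∈ Finset.Icc 1 (2 * k - 1),
          ((-1 : ℝ) ^ i / (Nat.factorial i : ℝ)) *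
            (∫ ω, fd i (X ω) * X ω ^ i ∂P) :=
  jensen_gap_higher_order_zero_mean_general P a b ha0 h0b k hk f fd hfd0 hderiv hnonneg X hX hfXint
    hmom hmom'
end

section
/- Let (Ω, Σ, P) be a probability space and let X : Ω → (0,∞) be a random variable such that X, 1/X, and log(X) are integrable. Then 0 ≤ log(E[X]) − E[log(X)] ≤ E[X]·E[1/X] − 1. -/
open MeasureTheory ProbabilityTheory Finset

/-- Let `X : Ω → (0,∞)` be a random variable such that `X`, `1/X` and
`log(X)` are integrable. Then `0 ≤ log(E[X]) − E[log(X)] ≤ E[X]·E[1/X] − 1`. -/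
theorem jensen_gap_log_first_order
    {Ω : Type*} [MeasurableSpace Ω] (P : Measure Ω) [IsProbabilityMeasure P]
    (X : Ω → ℝ) (hX : ∀ ω, 0 < X ω)
    (hXint : Integrable X P)
    (hXinvint : Integrable (fun ω => (X ω)⁻¹) P)
    (hlogint : Integrable (fun ω => Real.log (X ω)) P) :
    0 ≤ Real.log (∫ ω, X ω ∂P) - ∫ ω, Real.log (X ω) ∂P ∧
      Real.log (∫ ω, X ω ∂P) - ∫ ω, Real.log (X ω) ∂P ≤
        (∫ ω, X ω ∂P) * (∫ ω, (X ω)⁻¹ ∂P) - 1 := by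
  set m : ℝ := ∫ ω, X ω ∂P with hm_def
  have hm : 0 < m := by
    rw [hm_def]
    rw [MeasureTheory.integral_pos_iff_support_of_nonneg (fun ω => (hX ω).le) hXint]
    have : Function.support X = Set.univ := by
      ext ω; simp [Function.support, (hX ω).ne']
    rw [this]
    simp
  constructor
  · -- lower: ∫ log X ≤ log m
    have hpt : ∀ ω, Real.log (X ω) ≤ Real.log m + (X ω / m - 1) := by
      intro ω
      have h := Real.log_le_sub_one_of_pos (div_pos (hX ω) hm)
      rw [Real.log_div (hX ω).ne' hm.ne'] at h
      linarith
    have hintsub : Integrable (fun ω => X ω / m - 1) P := (hXint.div_const m).sub (integrable_const 1)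
    have hint2 : Integrable (fun ω => Real.log m + (X ω / m - 1)) P :=
      (integrable_const _).add hintsub
    have := integral_mono hlogint hint2 hpt
    have hcalc : ∫ ω, (Real.log m + (X ω / m - 1)) ∂P = Real.log m := by
      rw [integral_add (integrable_const _) hintsub,
        integral_sub (hXint.div_const m) (integrable_const 1), integral_const, integral_const,
        integral_div]
      simp [← hm_def, div_self hm.ne']
    rw [hcalc] at this
    linarith
  · -- upper
    have hpt : ∀ ω, Real.log m - Real.log (X ω) ≤ m * (X ω)⁻¹ - 1 := by
      intro ω
      have h := Real.log_le_sub_one_of_pos (div_pos hm (hX ω))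
      rw [Real.log_div hm.ne' (hX ω).ne'] at h
      rw [div_eq_mul_inv] at h
      linarith
    have hint1 : Integrable (fun ω => Real.log m - Real.log (X ω)) P :=
      (integrable_const _).sub hlogint
    have hint2 : Integrable (fun ω => m * (X ω)⁻¹ - 1) P :=
      (hXinvint.const_mul m).sub (integrable_const 1)
    have := integral_mono hint1 hint2 hpt
    rw [integral_sub (integrable_const _) hlogint,
      integral_sub (hXinvint.const_mul m) (integrable_const 1), integral_const, integral_const,
      integral_const_mul] at this
    simp at this
    linarith
end

section
/- Let (Ω, Σ, P) be a probability space, let k be a positive integer, and let X : Ω → (0,∞) be a random variable such that X, log(X), and (X − E[X])^i for 1 ≤ i ≤ 2k−1 are integrable. Then ∑_{i=1}^{2k−1} ((−1)^i / i) · (E[X])^{−i} · E[(X − E[X])^i] ≤ log(E[X]) − E[log(X)]. -/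
open MeasureTheory Finset

/-!
For odd `n`, the degree-`n` Taylor polynomial `∑_{i=1}^n (-1)^(i+1) t^i / i` of `log (1 + t)`
dominates it on all of `(-1, ∞)`: the difference vanishes at `0` and has derivative
`(-t)^n / (1 + t)`, whose sign is that of `-t`. Substituting `t = (X - E[X]) / E[X]`, for which
`1 + t = X / E[X]`, and taking expectations gives the bound.
-/

theorem isMaxOn_of_hasDerivAt_nonneg_of_nonpos {f f' : ℝ → ℝ} {a c : ℝ} (hac : a < c)
    (hf : ∀ x, a < x → HasDerivAt f (f' x) x)
    (hleft : ∀ x, a < x → x < c → 0 ≤ f' x) (hright : ∀ x, c < x → f' x ≤ 0) :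
    IsMaxOn f (Set.Ioi a) c := by
  intro t (ht : a < t)
  have hcont : ∀ D ⊆ Set.Ioi a, ContinuousOn f D := fun D hD x hx =>
    (hf x (hD hx)).continuousAt.continuousWithinAt
  rcases le_total t c with htc | hct
  · refine monotoneOn_of_hasDerivWithinAt_nonneg (f' := f') (convex_Ioc a c)
      (hcont _ fun x hx => hx.1) (fun x hx => ?_) (fun x hx => ?_)
      ⟨ht, htc⟩ ⟨hac, le_rfl⟩ htc
    · exact (hf x (interior_subset hx).1).hasDerivWithinAt
    · rw [interior_Ioc] at hx
      exact hleft x hx.1 hx.2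
  · refine antitoneOn_of_hasDerivWithinAt_nonpos (f' := f') (convex_Ici c)
      (hcont _ fun x (hx : c ≤ x) => hac.trans_le hx) (fun x hx => ?_) (fun x hx => ?_)
      Set.self_mem_Ici hct hct
    · rw [interior_Ici] at hx ⊢
      exact (hf x (hac.trans hx)).hasDerivWithinAt
    · rw [interior_Ici] at hx
      exact hright x hx

theorem hasDerivAt_log_one_add_add_sum_neg_pow_div (n : ℕ) {t : ℝ} (ht : -1 < t) :
    HasDerivAt (fun t => Real.log (1 + t) + ∑ i ∈ Icc 1 n, (-t) ^ i / i)
      ((-t) ^ n / (1 + t)) t := by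
  have h1t : 1 + t ≠ 0 := by linarith
  induction n with
  | zero => simpa using ((hasDerivAt_id t).const_add 1).log h1t
  | succ n ih =>
    simp only [sum_Icc_succ_top (Nat.le_add_left 1 n), ← add_assoc]
    have hterm : HasDerivAt (fun t : ℝ => (-t) ^ (n + 1) / (n + 1 : ℕ)) (-(-t) ^ n) t := by
      refine (((hasDerivAt_neg t).fun_pow (n + 1)).div_const _).congr_deriv ?_
      push_cast
      field_simp
    refine (ih.fun_add hterm).congr_deriv ?_
    field_simp
    ring

theorem log_one_add_add_sum_neg_pow_div_nonpos {n : ℕ} (hn : Odd n) {t : ℝ} (ht : -1 < t) :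
    Real.log (1 + t) + ∑ i ∈ Icc 1 n, (-t) ^ i / i ≤ 0 := by
  have hmax := isMaxOn_of_hasDerivAt_nonneg_of_nonpos neg_one_lt_zero
    (fun x hx => hasDerivAt_log_one_add_add_sum_neg_pow_div n hx)
    (fun x hx _ => div_nonneg (pow_nonneg (by linarith) n) (by linarith))
    (fun x hx => div_nonpos_of_nonpos_of_nonneg (hn.pow_nonpos (by linarith)) (by linarith)) ht
  have hsum0 : ∑ i ∈ Icc 1 n, (0 : ℝ) ^ i / i = 0 :=
    sum_eq_zero fun i hi => by simp [zero_pow (by grind : i ≠ 0)]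
  simpa [hsum0] using hmax

theorem sum_neg_one_pow_div_mul_zpow_mul_sub_pow_le_log_sub_log {n : ℕ} (hn : Odd n)
    {m x : ℝ} (hm : 0 < m) (hx : 0 < x) :
    ∑ i ∈ Icc 1 n, (-1 : ℝ) ^ i / i * m ^ (-(i : ℤ)) * (x - m) ^ i
      ≤ Real.log m - Real.log x := by
  have ht : -1 < (x - m) / m := by
    rw [lt_div_iff₀ hm]
    linarith
  have h := log_one_add_add_sum_neg_pow_div_nonpos hn ht
  have h1t : 1 + (x - m) / m = x / m := by
    field_simp
    ring
  rw [h1t, Real.log_div hx.ne' hm.ne'] at h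
  have hterm : ∀ i : ℕ, (-1 : ℝ) ^ i / i * m ^ (-(i : ℤ)) * (x - m) ^ i
      = (-((x - m) / m)) ^ i / i := fun i => by
    rw [zpow_neg, zpow_natCast, neg_pow ((x - m) / m), div_pow]
    ring
  simp only [hterm]
  linarith

theorem integral_pos_of_forall_pos {α : Type*} [MeasurableSpace α] {μ : Measure α} [NeZero μ]
    {f : α → ℝ} (hf : ∀ x, 0 < f x) (hfi : Integrable f μ) : 0 < ∫ x, f x ∂μ := by
  rw [integral_pos_iff_support_of_nonneg (fun x => (hf x).le) hfi,
    Function.support_eq_univ fun x => (hf x).ne']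
  simp [NeZero.ne μ]

/-- Let `k ≥ 1` and let `X : Ω → (0,∞)` be a random variable such that `X`,
`log(X)` and `(X − E[X])^i` (`1 ≤ i ≤ 2k−1`) are integrable. Then
`∑_{i=1}^{2k−1} ((−1)^i/i)·(E[X])^{−i}·E[(X − E[X])^i] ≤ log(E[X]) − E[log(X)]`. -/
theorem jensen_gap_log_higher_order_lower
    {Ω : Type*} [MeasurableSpace Ω] (P : Measure Ω) [IsProbabilityMeasure P]
    (k : ℕ) (hk : 0 < k)
    (X : Ω → ℝ) (hX : ∀ ω, 0 < X ω)
    (hXint : Integrable X P)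
    (hlogint : Integrable (fun ω => Real.log (X ω)) P)
    (hmom : ∀ i ∈ Finset.Icc 1 (2 * k - 1),
      Integrable (fun ω => (X ω - ∫ ω', X ω' ∂P) ^ i) P) :
    ∑ i ∈ Finset.Icc 1 (2 * k - 1),
        ((-1 : ℝ) ^ i / (i : ℝ)) * (∫ ω, X ω ∂P) ^ (-(i : ℤ)) *
          (∫ ω, (X ω - ∫ ω', X ω' ∂P) ^ i ∂P)
      ≤ Real.log (∫ ω, X ω ∂P) - ∫ ω, Real.log (X ω) ∂P := by
  set m := ∫ ω, X ω ∂P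
  have hm : 0 < m := integral_pos_of_forall_pos hX hXint
  set n := 2 * k - 1
  have hn : Odd n := ⟨k - 1, by omega⟩
  have hterms : ∀ i ∈ Icc 1 n,
      Integrable (fun ω => (-1 : ℝ) ^ i / i * m ^ (-(i : ℤ)) * (X ω - m) ^ i) P :=
    fun i hi => (hmom i hi).const_mul _
  calc ∑ i ∈ Icc 1 n, (-1 : ℝ) ^ i / i * m ^ (-(i : ℤ)) * ∫ ω, (X ω - m) ^ i ∂P
      = ∫ ω, ∑ i ∈ Icc 1 n, (-1 : ℝ) ^ i / i * m ^ (-(i : ℤ)) * (X ω - m) ^ i ∂P := by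
        simp only [integral_finsetSum _ hterms, integral_const_mul]
    _ ≤ ∫ ω, (Real.log m - Real.log (X ω)) ∂P :=
        integral_mono (integrable_finsetSum _ hterms) ((integrable_const _).sub hlogint)
          fun ω => sum_neg_one_pow_div_mul_zpow_mul_sub_pow_le_log_sub_log hn hm (hX ω)
    _ = Real.log m - ∫ ω, Real.log (X ω) ∂P := by
        simp [integral_sub (integrable_const _) hlogint]
end

section
/- Let (Ω, Σ, P) be a probability space, let k be a positive integer, and let X : Ω → (0,∞) be a random variable such that X, log(X), X^j, and X^{−j} for 1 ≤ j ≤ 2k−1 are integrable. Then ∑_{j=1}^{2k−1} ( 1/j + b_{k,j} · E[X^j] · (E[X])^{−j} ) ≤ log(E[X]) − E[log(X)] ≤ −∑_{j=1}^{2k−1} ( 1/j + b_{k,j} · E[X^{−j}] · (E[X])^{j} ). -/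
/-!
For odd `n` and `y > 0`, the Taylor polynomial `∑_{j=1}^n (1 - y)^j / j` of `-log y` at `1` lies
below `-log y`: adding `log y` gives a function with derivative `(1 - y)^n / y`, which has the sign
of `1 - y`, so it is maximal at `y = 1`, where it vanishes. Expanding the powers of `1 - y`
binomially rewrites this polynomial as `∑_{j=1}^n (1/j + b_{n,j} y^j)`. Integrating the pointwise
inequality at `y = X / E[X]` gives the lower bound on the Jensen gap, and at `y = E[X] / X` the
upper bound.
-/

open MeasureTheory ProbabilityTheory Finset

theorem sum_Icc_one_choose_mul_pow {R : Type*} [CommRing R] (n : ℕ) (x : R) :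
    ∑ j ∈ Icc 1 n, (n.choose j : R) * x ^ j = (1 + x) ^ n - 1 := by
  rw [add_comm, add_pow, Nat.range_succ_eq_Icc_zero, ← add_sum_Ioc_eq_sum_Icc n.zero_le,
    ← Finset.Icc_add_one_left_eq_Ioc]
  simp [mul_comm]

/- Induction on `n`: Pascal's rule and the absorption identity
`(n + 1) C(n, i) = (i + 1) C(n + 1, i + 1)` split the left side for `n + 1` into the one for `n`
plus `((1 - y)^(n+1) - 1) / (n + 1)`. -/
theorem sum_Icc_neg_one_pow_div_mul_choose_mul_pow (n : ℕ) (y : ℝ) :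
    ∑ j ∈ Icc 1 n, (-1) ^ j / j * n.choose j * y ^ j =
      ∑ j ∈ Icc 1 n, ((1 - y) ^ j - 1) / j := by
  induction n with
  | zero => simp
  | succ n ih =>
    have pascal : ∀ j ∈ Icc 1 (n + 1), (-1) ^ j / j * (n + 1).choose j * y ^ j =
        (-1) ^ j / j * n.choose j * y ^ j + ((n + 1).choose j : ℝ) * (-y) ^ j / (n + 1) := by
      intro j hj
      obtain ⟨i, rfl⟩ : ∃ i, j = i + 1 := ⟨j - 1, by grind⟩
      have choose_succ : ((n + 1).choose (i + 1) : ℝ) = n.choose i + n.choose (i + 1) := by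
        exact_mod_cast Nat.choose_succ_succ n i
      have absorb : ((n : ℝ) + 1) * n.choose i = (n + 1).choose (i + 1) * ((i : ℝ) + 1) := by
        exact_mod_cast Nat.add_one_mul_choose_eq n i
      rw [neg_pow]
      field_simp
      push_cast
      linear_combination (-1) ^ (i + 1) * y ^ (i + 1) * ((n + 1) * choose_succ + absorb)
    rw [sum_congr rfl pascal, sum_add_distrib, ← sum_div, sum_Icc_one_choose_mul_pow,
      sum_Icc_succ_top (by omega) fun j ↦ (-1) ^ j / j * n.choose j * y ^ j, Nat.choose_succ_self,
      ih, sum_Icc_succ_top (by omega)]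
    push_cast
    ring

theorem hasDerivAt_sum_one_sub_pow_div_add_log (n : ℕ) {x : ℝ} (hx : x ≠ 0) :
    HasDerivAt (fun y : ℝ ↦ ∑ j ∈ Icc 1 n, (1 - y) ^ j / j + Real.log y)
      ((1 - x) ^ n / x) x := by
  induction n with
  | zero => simpa using Real.hasDerivAt_log hx
  | succ n ih =>
    have hterm :
        HasDerivAt (fun y : ℝ ↦ (1 - y) ^ (n + 1) / (n + 1 : ℕ)) (-(1 - x) ^ n) x := by
      refine ((((hasDerivAt_id' x).const_sub 1).fun_pow (n + 1)).div_const _).congr_deriv ?_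
      field_simp
      simp
    have hsplit : (fun y : ℝ ↦ ∑ j ∈ Icc 1 (n + 1), (1 - y) ^ j / j + Real.log y) =
        fun y : ℝ ↦
          ∑ j ∈ Icc 1 n, (1 - y) ^ j / j + Real.log y + (1 - y) ^ (n + 1) / (n + 1 : ℕ) := by
      ext y
      rw [sum_Icc_succ_top (by omega)]
      ring
    rw [hsplit]
    refine (ih.add hterm).congr_deriv ?_
    field_simp
    ring

theorem isMaxOn_Ioi_of_hasDerivAt {f f' : ℝ → ℝ} {a c : ℝ} (hac : a < c)
    (hf : ∀ x ∈ Set.Ioi a, HasDerivAt f (f' x) x) (hleft : ∀ x ∈ Set.Ioo a c, 0 ≤ f' x)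
    (hright : ∀ x ∈ Set.Ioi c, f' x ≤ 0) : IsMaxOn f (Set.Ioi a) c := by
  intro y hy
  rcases le_total y c with hyc | hcy
  · have hmono : MonotoneOn f (Set.Ioc a c) := by
      refine monotoneOn_of_hasDerivWithinAt_nonneg (f' := f') (convex_Ioc a c)
        (fun x hx ↦ (hf x hx.1).continuousAt.continuousWithinAt) (fun x hx ↦ ?_) ?_
      · rw [interior_Ioc] at hx
        exact (hf x hx.1).hasDerivWithinAt
      · rwa [interior_Ioc]
    exact hmono ⟨hy, hyc⟩ ⟨hac, le_rfl⟩ hyc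
  · have hanti : AntitoneOn f (Set.Ici c) := by
      refine antitoneOn_of_hasDerivWithinAt_nonpos (f' := f') (convex_Ici c)
        (fun x hx ↦ (hf x (hac.trans_le hx)).continuousAt.continuousWithinAt)
        (fun x hx ↦ ?_) ?_
      · rw [interior_Ici] at hx
        exact (hf x (hac.trans hx)).hasDerivWithinAt
      · rwa [interior_Ici]
    exact hanti Set.self_mem_Ici hcy hcy

theorem sum_Icc_one_sub_pow_div_add_log_nonpos {n : ℕ} (hn : Odd n) {y : ℝ} (hy : 0 < y) :
    ∑ j ∈ Icc 1 n, (1 - y) ^ j / j + Real.log y ≤ 0 := by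
  have hmax := isMaxOn_Ioi_of_hasDerivAt zero_lt_one
    (fun x hx ↦ hasDerivAt_sum_one_sub_pow_div_add_log n (ne_of_gt hx))
    (fun x hx ↦ div_nonneg (pow_nonneg (sub_nonneg.2 hx.2.le) n) hx.1.le)
    (fun x (hx : 1 < x) ↦
      div_nonpos_of_nonpos_of_nonneg (hn.pow_nonpos (by linarith)) (by linarith))
  have hvanish : ∑ j ∈ Icc 1 n, (0 : ℝ) ^ j / j = 0 :=
    sum_eq_zero fun j hj ↦ by rw [zero_pow (by grind), zero_div]
  simpa [hvanish] using hmax hy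

theorem sum_Icc_inv_add_choose_mul_pow_le_neg_log {n : ℕ} (hn : Odd n) {y : ℝ} (hy : 0 < y) :
    ∑ j ∈ Icc 1 n, (1 / (j : ℝ) + (-1) ^ j / j * n.choose j * y ^ j) ≤ -Real.log y := by
  have hbinomial : ∑ j ∈ Icc 1 n, (1 / (j : ℝ) + (-1) ^ j / j * n.choose j * y ^ j) =
      ∑ j ∈ Icc 1 n, (1 - y) ^ j / j := by
    rw [sum_add_distrib, sum_Icc_neg_one_pow_div_mul_choose_mul_pow, ← sum_add_distrib]
    exact sum_congr rfl fun j _ ↦ by ring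
  linarith [sum_Icc_one_sub_pow_div_add_log_nonpos hn hy]

theorem sum_Icc_inv_add_choose_mul_integral_pow_le {Ω : Type*} [MeasurableSpace Ω]
    {P : Measure Ω} [IsProbabilityMeasure P] {n : ℕ} (hn : Odd n) {Z : Ω → ℝ}
    (hZ : ∀ᵐ ω ∂P, 0 < Z ω) (hlog : Integrable (fun ω ↦ Real.log (Z ω)) P)
    (hmom : ∀ j ∈ Icc 1 n, Integrable (fun ω ↦ Z ω ^ j) P) {c : ℝ} (hc : 0 < c) :
    ∑ j ∈ Icc 1 n, (1 / (j : ℝ) + (-1) ^ j / j * n.choose j * (∫ ω, Z ω ^ j ∂P) * c ^ j)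
      ≤ -(Real.log c + ∫ ω, Real.log (Z ω) ∂P) := by
  have hint : ∀ j ∈ Icc 1 n,
      Integrable (fun ω ↦ 1 / (j : ℝ) + (-1) ^ j / j * n.choose j * c ^ j * Z ω ^ j) P :=
    fun j hj ↦ (integrable_const _).add ((hmom j hj).const_mul _)
  calc _ = ∫ ω, ∑ j ∈ Icc 1 n,
          (1 / (j : ℝ) + (-1) ^ j / j * n.choose j * c ^ j * Z ω ^ j) ∂P := by
        rw [integral_finsetSum _ hint]
        refine sum_congr rfl fun j hj ↦ ?_
        rw [integral_add (integrable_const _) ((hmom j hj).const_mul _), integral_const,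
          integral_const_mul]
        simp only [probReal_univ, one_smul]
        ring
    _ ≤ ∫ ω, -(Real.log c + Real.log (Z ω)) ∂P := by
        refine integral_mono_ae (integrable_finsetSum _ hint)
          ((integrable_const _).add hlog).neg (hZ.mono fun ω hZω ↦ ?_)
        dsimp only
        rw [← Real.log_mul hc.ne' hZω.ne']
        simpa only [mul_pow, ← mul_assoc] using
          sum_Icc_inv_add_choose_mul_pow_le_neg_log hn (mul_pos hc hZω)
    _ = -(Real.log c + ∫ ω, Real.log (Z ω) ∂P) := by
        rw [integral_neg, integral_add (integrable_const _) hlog, integral_const]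
        simp

/-- Let `k ≥ 1` and let `X : Ω → (0,∞)` be a random variable such that `X`,
`log(X)`, `X^j` and `X^{−j}` (`1 ≤ j ≤ 2k−1`) are integrable. Then, with
`b_{k,j} = ((−1)^j/j)·C(2k−1,j)`,
`∑_{j=1}^{2k−1} (1/j + b_{k,j}·E[X^j]·(E[X])^{−j}) ≤ log(E[X]) − E[log(X)]
  ≤ −∑_{j=1}^{2k−1} (1/j + b_{k,j}·E[X^{−j}]·(E[X])^{j})`. -/
theorem jensen_gap_log_raw_moment_bounds
    {Ω : Type*} [MeasurableSpace Ω] (P : Measure Ω) [IsProbabilityMeasure P]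
    (k : ℕ) (hk : 0 < k)
    (X : Ω → ℝ) (hX : ∀ ω, 0 < X ω)
    (hXint : Integrable X P)
    (hlogint : Integrable (fun ω => Real.log (X ω)) P)
    (hmom : ∀ j ∈ Finset.Icc 1 (2 * k - 1), Integrable (fun ω => X ω ^ j) P)
    (hmomneg : ∀ j ∈ Finset.Icc 1 (2 * k - 1),
      Integrable (fun ω => X ω ^ (-(j : ℤ))) P) :
    ∑ j ∈ Finset.Icc 1 (2 * k - 1),
        (1 / (j : ℝ) + ((-1 : ℝ) ^ j / (j : ℝ)) * ((2 * k - 1).choose j : ℝ) *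
          (∫ ω, X ω ^ j ∂P) * (∫ ω, X ω ∂P) ^ (-(j : ℤ)))
      ≤ Real.log (∫ ω, X ω ∂P) - ∫ ω, Real.log (X ω) ∂P ∧
    Real.log (∫ ω, X ω ∂P) - ∫ ω, Real.log (X ω) ∂P
      ≤ -∑ j ∈ Finset.Icc 1 (2 * k - 1),
          (1 / (j : ℝ) + ((-1 : ℝ) ^ j / (j : ℝ)) * ((2 * k - 1).choose j : ℝ) *
            (∫ ω, X ω ^ (-(j : ℤ)) ∂P) * (∫ ω, X ω ∂P) ^ (j : ℕ)) := by
  have hn : Odd (2 * k - 1) := ⟨k - 1, by omega⟩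
  have hm : 0 < ∫ ω, X ω ∂P := by
    rw [integral_pos_iff_support_of_nonneg (fun ω ↦ (hX ω).le) hXint]
    simp [Function.support, (hX _).ne']
  have hXinv : ∀ᵐ ω ∂P, 0 < (X ω)⁻¹ := ae_of_all _ fun ω ↦ inv_pos.2 (hX ω)
  constructor
  · have h := sum_Icc_inv_add_choose_mul_integral_pow_le hn (ae_of_all _ hX) hlogint hmom
      (inv_pos.2 hm)
    simpa only [zpow_neg, zpow_natCast, inv_pow, Real.log_inv, neg_add, neg_neg,
      ← sub_eq_add_neg] using h
  · have h := sum_Icc_inv_add_choose_mul_integral_pow_le hn hXinv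
      (by simpa only [Real.log_inv] using hlogint.fun_neg)
      (fun j hj ↦ by simpa only [zpow_neg, zpow_natCast, inv_pow] using hmomneg j hj) hm
    simp only [Real.log_inv, integral_neg, zpow_neg, zpow_natCast, inv_pow] at h ⊢
    linarith
end

section
/- Let μ ∈ ℝ, σ > 0, and let k be a positive integer. Then ∑_{j=1}^{2k−1} ( 1/j + b_{k,j} · exp( (j² − j)·σ²/2 ) ) ≤ σ²/2 ≤ −∑_{j=1}^{2k−1} ( 1/j + b_{k,j} · exp( (j² + j)·σ²/2 ) ); equivalently, these are lower and upper bounds on the Jensen's gap log(E[X]) − E[log(X)] = σ²/2 of a log-normal random variable X = exp(Y) with Y ~ N(μ, σ²). -/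
/-!
Let `p(z) = ∑_{j=1}^n (1/j + (-1)^j C(n,j) z^j / j)` with `n` odd. Then `p(z) + log z` vanishes
at `z = 1` (a harmonic-number identity) and has derivative `(1 - z) ^ n / z`, which is `≥ 0` on
`(0, 1]` and `≤ 0` on `[1, ∞)`; hence `p(z) ≤ -log z` for all `z > 0`. Taking expectations at
`Z = exp (Y - c)` with `Y ~ N(0, σ²)`, where `E[Z ^ j] = exp (σ² j² / 2 - j c)` and
`E[-log Z] = c`, gives the lower bound for `c = σ² / 2` (`Z` then has the law of `X / E[X]`)
and the upper bound for `c = -σ² / 2` (the law of `E[X] / X`).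
-/

open Finset Real MeasureTheory ProbabilityTheory
open scoped NNReal

theorem sum_Icc_one_neg_one_pow_mul_choose_mul_pow (n : ℕ) (z : ℝ) :
    ∑ j ∈ Icc 1 n, (-1 : ℝ) ^ j * n.choose j * z ^ j = (1 - z) ^ n - 1 := by
  rw [sub_eq_neg_add 1 z, add_pow, sum_range_eq_add_Ico _ n.succ_pos, Nat.succ_eq_add_one,
    Ico_add_one_right_eq_Icc]
  simp only [one_pow, mul_one, pow_zero, Nat.choose_zero_right, Nat.cast_one, add_sub_cancel_left]
  exact sum_congr rfl fun j _ ↦ by rw [neg_pow]; ring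

theorem sum_Icc_one_inv_add_neg_one_pow_div_mul_choose (n : ℕ) :
    ∑ j ∈ Icc 1 n, (1 / (j : ℝ) + ((-1 : ℝ) ^ j / j) * n.choose j) = 0 := by
  induction n with
  | zero => simp
  | succ n ih =>
    -- `(C(n+1, j) - C(n, j)) / j = C(n, j-1) / j = C(n+1, j) / (n+1)`
    have pascal : ∀ j ∈ Icc 1 (n + 1), 1 / (j : ℝ) + ((-1 : ℝ) ^ j / j) * (n + 1).choose j
        = (1 / (j : ℝ) + ((-1 : ℝ) ^ j / j) * n.choose j)
          + (-1 : ℝ) ^ j * (n + 1).choose j / (n + 1) := by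
      intro j hj
      obtain ⟨i, rfl⟩ : ∃ i, j = i + 1 := ⟨j - 1, by grind⟩
      have h : ((n : ℝ) + 1) * n.choose i = (n + 1).choose (i + 1) * ((i : ℝ) + 1) := by
        exact_mod_cast Nat.add_one_mul_choose_eq n i
      rw [Nat.choose_succ_succ] at h ⊢
      field_simp
      push_cast at h ⊢
      linear_combination -(-1 : ℝ) ^ i * h
    calc ∑ j ∈ Icc 1 (n + 1), (1 / (j : ℝ) + ((-1 : ℝ) ^ j / j) * (n + 1).choose j)
        = (∑ j ∈ Icc 1 n, (1 / (j : ℝ) + ((-1 : ℝ) ^ j / j) * n.choose j)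
            + (1 / ((n : ℝ) + 1) + 0))
          + (∑ j ∈ Icc 1 (n + 1), (-1 : ℝ) ^ j * (n + 1).choose j * 1 ^ j) / (n + 1) := by
          rw [sum_congr rfl pascal, sum_add_distrib, sum_Icc_succ_top (by omega), sum_div,
            Nat.choose_succ_self]
          push_cast
          simp only [one_pow, mul_one]
          ring
      _ = 0 := by
          rw [ih, sum_Icc_one_neg_one_pow_mul_choose_mul_pow]
          field_simp
          ring

/-- `negLogApprox n z = ∫ t in z..1, (1 - (1 - t) ^ n) / t`. -/
noncomputable def negLogApprox (n : ℕ) (z : ℝ) : ℝ :=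
  ∑ j ∈ Icc 1 n, (1 / (j : ℝ) + ((-1 : ℝ) ^ j / j) * n.choose j * z ^ j)

theorem negLogApprox_one (n : ℕ) : negLogApprox n 1 = 0 := by
  simpa [negLogApprox] using sum_Icc_one_inv_add_neg_one_pow_div_mul_choose n

theorem hasDerivAt_negLogApprox (n : ℕ) {z : ℝ} (hz : z ≠ 0) :
    HasDerivAt (negLogApprox n) (((1 - z) ^ n - 1) / z) z := by
  have h := HasDerivAt.fun_sum (u := Icc 1 n) fun j _ ↦
    ((hasDerivAt_pow j z).const_mul ((-1 : ℝ) ^ j / j * n.choose j)).const_add (1 / (j : ℝ))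
  refine h.congr_deriv ?_
  rw [← sum_Icc_one_neg_one_pow_mul_choose_mul_pow, sum_div]
  refine sum_congr rfl fun j hj ↦ ?_
  obtain ⟨i, rfl⟩ : ∃ i, j = i + 1 := ⟨j - 1, by grind⟩
  field_simp
  simp only [add_tsub_cancel_right, pow_succ]
  ring

theorem negLogApprox_le_neg_log {n : ℕ} (hn : Odd n) {z : ℝ} (hz : 0 < z) :
    negLogApprox n z ≤ -log z := by
  set P : ℝ → ℝ := fun x ↦ negLogApprox n x + log x
  have hP : ∀ x, 0 < x → HasDerivAt P ((1 - x) ^ n / x) x := fun x hx ↦ by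
    refine ((hasDerivAt_negLogApprox n hx.ne').add (hasDerivAt_log hx.ne')).congr_deriv ?_
    ring
  have hP_cont : ∀ s ⊆ Set.Ioi 0, ContinuousOn P s := fun s hs x hx ↦
    (hP x (hs hx)).continuousAt.continuousWithinAt
  suffices P z ≤ P 1 by
    simp only [P, negLogApprox_one, log_one, add_zero] at this
    linarith
  rcases le_total z 1 with h | h
  · refine monotoneOn_of_hasDerivWithinAt_nonneg (convex_Ioc 0 1)
      (hP_cont _ Set.Ioc_subset_Ioi_self) (fun x hx ↦ (hP x ?_).hasDerivWithinAt)
      (fun x hx ↦ ?_) ⟨hz, h⟩ ⟨one_pos, le_rfl⟩ h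
    · rw [interior_Ioc] at hx
      exact hx.1
    · rw [interior_Ioc] at hx
      exact div_nonneg (pow_nonneg (by linarith [hx.2]) n) hx.1.le
  · refine antitoneOn_of_hasDerivWithinAt_nonpos (convex_Ici 1)
      (hP_cont _ (Set.Ici_subset_Ioi.2 one_pos)) (fun x hx ↦ (hP x ?_).hasDerivWithinAt)
      (fun x hx ↦ ?_) (Set.mem_Ici.2 le_rfl) h h
    · rw [interior_Ici] at hx
      exact one_pos.trans hx
    · rw [interior_Ici, Set.mem_Ioi] at hx
      exact div_nonpos_of_nonpos_of_nonneg (hn.pow_nonpos (by linarith)) (by linarith)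

theorem sum_inv_add_mul_integral_pow_le_neg_integral_log {Ω : Type*} [MeasurableSpace Ω]
    {P : Measure Ω} [IsProbabilityMeasure P] {n : ℕ} (hn : Odd n) {Z : Ω → ℝ}
    (hZ : ∀ᵐ ω ∂P, 0 < Z ω) (hZ_pow : ∀ j ∈ Icc 1 n, Integrable (fun ω ↦ Z ω ^ j) P)
    (hZ_log : Integrable (fun ω ↦ log (Z ω)) P) :
    ∑ j ∈ Icc 1 n, (1 / (j : ℝ) + ((-1 : ℝ) ^ j / j) * n.choose j * ∫ ω, Z ω ^ j ∂P)
      ≤ -∫ ω, log (Z ω) ∂P := by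
  have hint : ∀ j ∈ Icc 1 n,
      Integrable (fun ω ↦ 1 / (j : ℝ) + ((-1 : ℝ) ^ j / j) * n.choose j * Z ω ^ j) P :=
    fun j hj ↦ (integrable_const _).add ((hZ_pow j hj).const_mul _)
  calc ∑ j ∈ Icc 1 n, (1 / (j : ℝ) + ((-1 : ℝ) ^ j / j) * n.choose j * ∫ ω, Z ω ^ j ∂P)
      = ∫ ω, negLogApprox n (Z ω) ∂P := by
        simp only [negLogApprox]
        rw [integral_finsetSum _ hint]
        refine sum_congr rfl fun j hj ↦ ?_
        rw [integral_add (integrable_const _) ((hZ_pow j hj).const_mul _), integral_const,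
          integral_const_mul]
        simp
    _ ≤ ∫ ω, -log (Z ω) ∂P :=
        integral_mono_ae (integrable_finsetSum _ hint) hZ_log.neg
          (hZ.mono fun _ ↦ negLogApprox_le_neg_log hn)
    _ = -∫ ω, log (Z ω) ∂P := integral_neg _

theorem integral_exp_mul_sub_gaussianReal (μ : ℝ) (v : ℝ≥0) (t c : ℝ) :
    ∫ x, exp (t * (x - c)) ∂gaussianReal μ v = exp (t * (μ - c) + v * t ^ 2 / 2) := by
  have hmgf := congrFun (mgf_fun_id_gaussianReal (μ := μ) (v := v)) t
  rw [mgf] at hmgf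
  simp_rw [mul_sub, sub_eq_add_neg (t * _), exp_add, integral_mul_const, hmgf, ← exp_add]
  ring_nf

theorem sum_inv_add_mul_exp_le {n : ℕ} (hn : Odd n) (v : ℝ≥0) (c : ℝ) :
    ∑ j ∈ Icc 1 n, (1 / (j : ℝ) + ((-1 : ℝ) ^ j / j) * n.choose j * exp (v * j ^ 2 / 2 - j * c))
      ≤ c := by
  have hpow : ∀ j : ℕ, (fun x ↦ exp (x - c) ^ j) = fun x ↦ exp (j * (x - c)) := fun j ↦
    funext fun x ↦ (exp_nat_mul _ j).symm
  have hid : Integrable (fun x ↦ x) (gaussianReal 0 v) :=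
    (memLp_id_gaussianReal 1).integrable le_rfl
  have h := sum_inv_add_mul_integral_pow_le_neg_integral_log (P := gaussianReal 0 v) hn
    (Z := fun x ↦ exp (x - c)) (ae_of_all _ fun x ↦ exp_pos _)
    (fun j _ ↦ by
      rw [hpow]
      simp_rw [mul_sub, sub_eq_add_neg (_ * _), exp_add]
      exact (integrable_exp_mul_gaussianReal _).mul_const _)
    (by simp only [log_exp]; exact hid.sub (integrable_const c))
  simp_rw [hpow, integral_exp_mul_sub_gaussianReal, log_exp] at h
  rw [integral_sub hid (integrable_const c)] at h
  convert h using 4 with j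
  · ring_nf
  · simp

theorem jensen_gap_log_lognormal_bounds_general
    (σ : ℝ) (k : ℕ) (hk : 0 < k) :
    ∑ j ∈ Finset.Icc 1 (2 * k - 1),
        (1 / (j : ℝ) + ((-1 : ℝ) ^ j / (j : ℝ)) * ((2 * k - 1).choose j : ℝ) *
          Real.exp (((j : ℝ) ^ 2 - (j : ℝ)) * σ ^ 2 / 2))
      ≤ σ ^ 2 / 2 ∧
    σ ^ 2 / 2
      ≤ -∑ j ∈ Finset.Icc 1 (2 * k - 1),
          (1 / (j : ℝ) + ((-1 : ℝ) ^ j / (j : ℝ)) * ((2 * k - 1).choose j : ℝ) *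
            Real.exp (((j : ℝ) ^ 2 + (j : ℝ)) * σ ^ 2 / 2)) := by
  have hn : Odd (2 * k - 1) := ⟨k - 1, by omega⟩
  have bound := sum_inv_add_mul_exp_le hn (σ ^ 2).toNNReal
  rw [Real.coe_toNNReal _ (sq_nonneg σ)] at bound
  refine ⟨?_, le_neg_of_le_neg ?_⟩
  · convert bound (σ ^ 2 / 2) using 6 with j
    ring
  · convert bound (-(σ ^ 2 / 2)) using 6 with j
    ring

/-- Let `μ ∈ ℝ`, `σ > 0`, and let `k ≥ 1`. Then, with
`b_{k,j} = ((−1)^j/j)·C(2k−1,j)`,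
`∑_{j=1}^{2k−1} (1/j + b_{k,j}·exp((j²−j)σ²/2)) ≤ σ²/2
  ≤ −∑_{j=1}^{2k−1} (1/j + b_{k,j}·exp((j²+j)σ²/2))`;
these are the lower and upper bounds on the Jensen's gap `σ²/2` of a log-normal random
variable with parameters `(μ, σ)`. -/
theorem jensen_gap_log_lognormal_bounds
    (μ σ : ℝ) (hσ : 0 < σ) (k : ℕ) (hk : 0 < k) :
    ∑ j ∈ Finset.Icc 1 (2 * k - 1),
        (1 / (j : ℝ) + ((-1 : ℝ) ^ j / (j : ℝ)) * ((2 * k - 1).choose j : ℝ) *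
          Real.exp (((j : ℝ) ^ 2 - (j : ℝ)) * σ ^ 2 / 2))
      ≤ σ ^ 2 / 2 ∧
    σ ^ 2 / 2
      ≤ -∑ j ∈ Finset.Icc 1 (2 * k - 1),
          (1 / (j : ℝ) + ((-1 : ℝ) ^ j / (j : ℝ)) * ((2 * k - 1).choose j : ℝ) *
            Real.exp (((j : ℝ) ^ 2 + (j : ℝ)) * σ ^ 2 / 2)) :=
  jensen_gap_log_lognormal_bounds_general σ k hk
end

section
/- Let X be a random variable with the exponential distribution with rate 1 (density e^{−x} on (0,∞)), let f(x) = exp(x/2), and let k be a positive integer. Then √e · ∑_{i=1}^{2k−1} (1/2^i) · ∑_{j=0}^{i} (−1)^{i−j} / (i−j)! ≤ E[exp(X/2)] − exp(E[X]/2) ≤ ∑_{i=1}^{2k−1} ∑_{j=0}^{i} 2^{1−j} · (−1)^{i−j+1} / j!, where moreover E[exp(X/2)] − exp(E[X]/2) = 2 − √e. -/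
/-!
With `X` exponential of rate `1`, `E[exp(X/2)] = 1/(1 - 1/2) = 2` and `E[X] = 1`, so the gap is
`2 - √e`, and both bounds are statements about partial sums of exponential series.

Lower bound: the inner sums are the partial sums `A_i = ∑_{l ≤ i} (-1)^l/l!`, and Abel summation
against `2^{-i}` turns the outer sum into `2 ∑_{l < 2k} (-1/2)^l/l! - 2^{1-2k} A_{2k-1} - 1`. An
alternating series with decreasing terms lies above its partial sums with an even number of
terms and these are nonnegative, so the first sum is at most `e^{-1/2}` and `A_{2k-1} ≥ 0`.

Upper bound: the inner sums are `-2 u_i` with `u_i = ∑_{j ≤ i} (-1)^{i-j} t_j` and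
`t_j = 2^{-j}/j!`. Since `u_i + u_{i+1} = t_{i+1}`, the outer sum collapses in pairs to
`2 - 2 ∑_{j < k} t_{2j+1}`, and `2 t_{2j+1} ≤ t_{2j} + t_{2j+1}` bounds twice the odd part of the
series by `e^{1/2}`.
-/

open MeasureTheory ProbabilityTheory Finset Real
open scoped Nat

theorem Finset.sum_range_two_mul {M : Type*} [AddCommMonoid M] (f : ℕ → M) (n : ℕ) :
    ∑ i ∈ range (2 * n), f i = ∑ j ∈ range n, (f (2 * j) + f (2 * j + 1)) := by
  induction n with
  | zero => simp
  | succ n ih =>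
    rw [mul_add, mul_one, sum_range_succ, sum_range_succ, sum_range_succ, ih, add_assoc]

theorem Finset.sum_Icc_one_eq_sum_range_sub {M : Type*} [AddCommGroup M] (f : ℕ → M) (n : ℕ) :
    ∑ i ∈ Icc 1 n, f i = ∑ i ∈ range (n + 1), f i - f 0 := by
  rw [range_eq_Ico, sum_eq_sum_Ico_succ_bot (Nat.succ_pos n), add_sub_cancel_left]
  rfl

theorem Antitone.sum_range_two_mul_neg_one_pow_mul_nonneg {R : Type*} [Ring R] [PartialOrder R]
    [IsOrderedRing R] {f : ℕ → R} (hf : Antitone f) (n : ℕ) :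
    0 ≤ ∑ i ∈ range (2 * n), (-1) ^ i * f i := by
  rw [sum_range_two_mul]
  refine sum_nonneg fun j _ ↦ ?_
  rw [pow_succ, pow_mul, neg_one_sq, one_pow, one_mul, one_mul, neg_one_mul, ← sub_eq_add_neg,
    sub_nonneg]
  exact hf (Nat.le_succ _)

theorem antitone_pow_div_factorial {x : ℝ} (hx₀ : 0 ≤ x) (hx₁ : x ≤ 1) :
    Antitone fun n : ℕ ↦ x ^ n / n ! := by
  refine antitone_nat_of_succ_le fun n ↦ ?_
  exact div_le_div₀ (by positivity) (pow_le_pow_of_le_one hx₀ hx₁ n.le_succ) (by positivity)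
    (mod_cast Nat.factorial_le n.le_succ)

theorem sum_range_two_mul_neg_pow_div_factorial_le_exp_neg {x : ℝ} (hx₀ : 0 ≤ x)
    (hx₁ : x ≤ 1) (n : ℕ) : ∑ i ∈ range (2 * n), (-x) ^ i / i ! ≤ exp (-x) := by
  have hlim := (NormedSpace.expSeries_div_hasSum_exp (-x)).tendsto_sum_nat
  simp_rw [← exp_eq_exp_ℝ, neg_pow x, mul_div_assoc] at hlim ⊢
  exact (antitone_pow_div_factorial hx₀ hx₁).alternating_series_le_tendsto hlim n

theorem two_mul_sum_range_pow_odd_div_factorial_le_exp {x : ℝ} (hx₀ : 0 ≤ x) (hx₁ : x ≤ 1)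
    (n : ℕ) : 2 * ∑ j ∈ range n, x ^ (2 * j + 1) / (2 * j + 1)! ≤ exp x :=
  calc 2 * ∑ j ∈ range n, x ^ (2 * j + 1) / (2 * j + 1)!
      = ∑ j ∈ range n, (x ^ (2 * j + 1) / (2 * j + 1)! + x ^ (2 * j + 1) / (2 * j + 1)!) := by
        rw [mul_sum]; simp_rw [two_mul]
    _ ≤ ∑ j ∈ range n, (x ^ (2 * j) / (2 * j)! + x ^ (2 * j + 1) / (2 * j + 1)!) :=
        sum_le_sum fun j _ ↦
          add_le_add_left (antitone_pow_div_factorial hx₀ hx₁ (2 * j).le_succ) _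
    _ = ∑ i ∈ range (2 * n), x ^ i / i ! := (sum_range_two_mul (fun i ↦ x ^ i / i !) n).symm
    _ ≤ exp x := sum_le_exp_of_nonneg hx₀ _

theorem one_sub_mul_sum_range_pow_mul_sum_range {R : Type*} [CommRing R] (r : R) (a : ℕ → R)
    (n : ℕ) :
    (1 - r) * ∑ i ∈ range n, r ^ i * ∑ j ∈ range (i + 1), a j
      = ∑ j ∈ range n, r ^ j * a j - r ^ n * ∑ j ∈ range n, a j := by
  induction n with
  | zero => simp
  | succ n ih =>
    rw [sum_range_succ, mul_add, ih]
    simp only [sum_range_succ]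
    ring

section AltCumsum

variable {R : Type*} [CommRing R]

def altCumsum (t : ℕ → R) (i : ℕ) : R := ∑ j ∈ range (i + 1), (-1) ^ (i - j) * t j

theorem altCumsum_add_altCumsum_succ (t : ℕ → R) (i : ℕ) :
    altCumsum t i + altCumsum t (i + 1) = t (i + 1) := by
  rw [altCumsum, altCumsum, sum_range_succ _ (i + 1), Nat.sub_self, pow_zero, one_mul,
    ← add_assoc, ← sum_add_distrib, add_eq_right]
  refine sum_eq_zero fun j hj ↦ ?_
  rw [Nat.sub_add_comm (Nat.lt_succ_iff.mp (mem_range.mp hj)), pow_succ]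
  ring

theorem sum_range_two_mul_altCumsum (t : ℕ → R) (m : ℕ) :
    ∑ i ∈ range (2 * m), altCumsum t i = ∑ j ∈ range m, t (2 * j + 1) := by
  rw [sum_range_two_mul]
  exact sum_congr rfl fun j _ ↦ altCumsum_add_altCumsum_succ t (2 * j)

end AltCumsum

theorem sqrt_exp_one_mul_sum_Icc_half_pow_mul_alternating_le (m : ℕ) :
    √(exp 1) * ∑ i ∈ Icc 1 (2 * m + 1), (1 / (2 : ℝ) ^ i) *
        ∑ j ∈ range (i + 1), (-1 : ℝ) ^ (i - j) / (i - j)! ≤ 2 - √(exp 1) := by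
  set a : ℕ → ℝ := fun j ↦ (-1) ^ j / (j ! : ℝ)
  have hreflect (i : ℕ) :
      ∑ j ∈ range (i + 1), (-1 : ℝ) ^ (i - j) / (i - j)! = ∑ j ∈ range (i + 1), a j :=
    sum_range_reflect a (i + 1)
  have hB : ∑ j ∈ range (2 * (m + 1)), (1 / 2 : ℝ) ^ j * a j ≤ exp (-(1 / 2)) := by
    convert sum_range_two_mul_neg_pow_div_factorial_le_exp_neg (x := 1 / 2) (by norm_num)
      (by norm_num) (m + 1) using 2 with j
    rw [neg_pow]; ring
  have hA : 0 ≤ ∑ j ∈ range (2 * (m + 1)), a j := by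
    simpa [a, div_eq_mul_inv] using
      (antitone_pow_div_factorial zero_le_one le_rfl).sum_range_two_mul_neg_one_pow_mul_nonneg
        (m + 1)
  have hS : ∑ i ∈ range (2 * (m + 1)), (1 / 2 : ℝ) ^ i * ∑ j ∈ range (i + 1), a j
      ≤ 2 * exp (-(1 / 2)) := by
    have habel := one_sub_mul_sum_range_pow_mul_sum_range (1 / 2 : ℝ) a (2 * (m + 1))
    have := mul_nonneg (pow_nonneg (one_half_pos (α := ℝ)).le (2 * (m + 1))) hA
    linarith
  have ha0 : (1 / 2 : ℝ) ^ 0 * ∑ j ∈ range (0 + 1), a j = 1 := by simp [a]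
  have hinv : √(exp 1) * exp (-(1 / 2)) = 1 := by
    rw [← exp_half, ← exp_add]; norm_num
  simp_rw [hreflect, ← one_div_pow]
  rw [sum_Icc_one_eq_sum_range_sub, show 2 * m + 1 + 1 = 2 * (m + 1) by ring, ha0]
  calc _ ≤ √(exp 1) * (2 * exp (-(1 / 2)) - 1) := by gcongr
    _ = 2 - √(exp 1) := by linear_combination 2 * hinv

theorem two_sub_sqrt_exp_one_le_sum_Icc_sum_two_zpow_mul_alternating (m : ℕ) :
    2 - √(exp 1) ≤ ∑ i ∈ Icc 1 (2 * m + 1), ∑ j ∈ range (i + 1),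
      (2 : ℝ) ^ ((1 : ℤ) - j) * (-1) ^ (i - j + 1) / j ! := by
  set t : ℕ → ℝ := fun j ↦ (1 / 2) ^ j / (j ! : ℝ)
  have hinner (i : ℕ) :
      ∑ j ∈ range (i + 1), (2 : ℝ) ^ ((1 : ℤ) - j) * (-1) ^ (i - j + 1) / (j ! : ℝ)
        = -2 * altCumsum t i := by
    rw [altCumsum, mul_sum]
    refine sum_congr rfl fun j _ ↦ ?_
    rw [zpow_sub₀ two_ne_zero, zpow_one, zpow_natCast, pow_succ]
    simp only [t, one_div_pow]
    ring
  have hpair := sum_range_two_mul_altCumsum t (m + 1)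
  have hodd := two_mul_sum_range_pow_odd_div_factorial_le_exp (x := 1 / 2) (by norm_num)
    (by norm_num) (m + 1)
  have hu0 : altCumsum t 0 = 1 := by simp [altCumsum, t]
  simp_rw [hinner]
  rw [sum_Icc_one_eq_sum_range_sub, ← mul_sum, show 2 * m + 1 + 1 = 2 * (m + 1) by ring, hpair,
    hu0, ← exp_half]
  linarith

theorem integral_expMeasure {r : ℝ} (hr : 0 < r) (g : ℝ → ℝ) :
    ∫ x, g x ∂expMeasure r = ∫ x in Set.Ioi 0, r * exp (-(r * x)) * g x := by
  have hpdf (x : ℝ) :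
      (exponentialPDF r x).toReal = (Set.Ici 0).indicator (fun x ↦ r * exp (-(r * x))) x := by
    rw [exponentialPDF_eq, ENNReal.toReal_ofReal (by split_ifs <;> positivity),
      Set.indicator_apply]
    rfl
  change ∫ x, g x ∂volume.withDensity (exponentialPDF r) = _
  rw [integral_withDensity_eq_integral_toReal_smul (f := exponentialPDF r)
    (measurable_exponentialPDFReal r).ennreal_ofReal (ae_of_all _ fun _ ↦ ENNReal.ofReal_lt_top),
    ← integral_Ici_eq_integral_Ioi, ← integral_indicator measurableSet_Ici]
  simp_rw [hpdf, smul_eq_mul, ← Set.indicator_mul_left]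

theorem integral_id_expMeasure {r : ℝ} (hr : 0 < r) : ∫ x, x ∂expMeasure r = r⁻¹ := by
  have hΓ := integral_rpow_mul_exp_neg_mul_Ioi two_pos hr
  norm_num at hΓ
  rw [integral_expMeasure hr]
  simp_rw [mul_assoc, mul_comm (exp _)]
  rw [integral_const_mul, hΓ]
  field_simp

theorem integral_exp_mul_expMeasure {r t : ℝ} (hr : 0 < r) (ht : t < r) :
    ∫ x, exp (t * x) ∂expMeasure r = r / (r - t) := by
  rw [integral_expMeasure hr]
  simp_rw [mul_assoc, ← exp_add, ← neg_mul, ← add_mul, neg_add_eq_sub]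
  rw [integral_const_mul, integral_exp_mul_Ioi (sub_neg.2 ht), mul_zero, exp_zero, ← neg_sub r t,
    neg_div_neg_eq, mul_one_div]

theorem jensen_gap_exp_exponential_distribution_general
    {Ω : Type*} [MeasurableSpace Ω] (P : Measure Ω)
    (k : ℕ) (hk : 0 < k)
    (X : Ω → ℝ) (hX : Measurable X)
    (hmap : P.map X = expMeasure 1) :
    (Real.sqrt (Real.exp 1) *
        ∑ i ∈ Finset.Icc 1 (2 * k - 1), (1 / (2 : ℝ) ^ i) *
          ∑ j ∈ Finset.range (i + 1), (-1 : ℝ) ^ (i - j) / (Nat.factorial (i - j) : ℝ)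
      ≤ (∫ ω, Real.exp (X ω / 2) ∂P) - Real.exp ((∫ ω, X ω ∂P) / 2)) ∧
    ((∫ ω, Real.exp (X ω / 2) ∂P) - Real.exp ((∫ ω, X ω ∂P) / 2)
      ≤ ∑ i ∈ Finset.Icc 1 (2 * k - 1), ∑ j ∈ Finset.range (i + 1),
          (2 : ℝ) ^ ((1 : ℤ) - (j : ℤ)) * (-1 : ℝ) ^ (i - j + 1) / (Nat.factorial j : ℝ)) ∧
    ((∫ ω, Real.exp (X ω / 2) ∂P) - Real.exp ((∫ ω, X ω ∂P) / 2)
      = 2 - Real.sqrt (Real.exp 1)) := by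
  obtain ⟨m, rfl⟩ := Nat.exists_eq_add_one_of_ne_zero hk.ne'
  have hmean : ∫ ω, X ω ∂P = 1 := by
    rw [← integral_map (f := fun x ↦ x) hX.aemeasurable aestronglyMeasurable_id, hmap,
      integral_id_expMeasure one_pos, inv_one]
  have hmgf : ∫ ω, exp (X ω / 2) ∂P = 2 := by
    rw [← integral_map (f := fun x ↦ exp (x / 2)) hX.aemeasurable (by fun_prop), hmap]
    convert integral_exp_mul_expMeasure one_pos one_half_lt_one using 4 with x
    · ring
    · norm_num
  have hgap : ∫ ω, exp (X ω / 2) ∂P - exp ((∫ ω, X ω ∂P) / 2) = 2 - √(exp 1) := by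
    rw [hmgf, hmean, exp_half]
  rw [hgap, show 2 * (m + 1) - 1 = 2 * m + 1 by omega]
  exact ⟨sqrt_exp_one_mul_sum_Icc_half_pow_mul_alternating_le m,
    two_sub_sqrt_exp_one_le_sum_Icc_sum_two_zpow_mul_alternating m, rfl⟩

/-- Let `X` be a random variable with the exponential distribution with
rate `1`, let `f(x) = exp(x/2)`, and let `k ≥ 1`. Then
`√e·∑_{i=1}^{2k−1} (1/2^i)·∑_{j=0}^{i} (−1)^{i−j}/(i−j)! ≤ E[exp(X/2)] − exp(E[X]/2)
  ≤ ∑_{i=1}^{2k−1} ∑_{j=0}^{i} 2^{1−j}·(−1)^{i−j+1}/j!`,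
and moreover `E[exp(X/2)] − exp(E[X]/2) = 2 − √e`. -/
theorem jensen_gap_exp_exponential_distribution
    {Ω : Type*} [MeasurableSpace Ω] (P : Measure Ω) [IsProbabilityMeasure P]
    (k : ℕ) (hk : 0 < k)
    (X : Ω → ℝ) (hX : Measurable X)
    (hmap : P.map X = expMeasure 1) :
    (Real.sqrt (Real.exp 1) *
        ∑ i ∈ Finset.Icc 1 (2 * k - 1), (1 / (2 : ℝ) ^ i) *
          ∑ j ∈ Finset.range (i + 1), (-1 : ℝ) ^ (i - j) / (Nat.factorial (i - j) : ℝ)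
      ≤ (∫ ω, Real.exp (X ω / 2) ∂P) - Real.exp ((∫ ω, X ω ∂P) / 2)) ∧
    ((∫ ω, Real.exp (X ω / 2) ∂P) - Real.exp ((∫ ω, X ω ∂P) / 2)
      ≤ ∑ i ∈ Finset.Icc 1 (2 * k - 1), ∑ j ∈ Finset.range (i + 1),
          (2 : ℝ) ^ ((1 : ℤ) - (j : ℤ)) * (-1 : ℝ) ^ (i - j + 1) / (Nat.factorial j : ℝ)) ∧
    ((∫ ω, Real.exp (X ω / 2) ∂P) - Real.exp ((∫ ω, X ω ∂P) / 2)
      = 2 - Real.sqrt (Real.exp 1)) :=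
  jensen_gap_exp_exponential_distribution_general P k hk X hX hmap
end

section
/- Let ν be a probability measure on a measurable space 𝒳 (the data distribution), let ϱ be a probability measure on a measurable space Θ (the distribution over parameters), and let p : Θ × 𝒳 → (0,∞) be a measurable function (the conditional model density). Define μ(x) = ∫_Θ p(θ, x) dϱ(θ) and assume μ(x) ∈ (0,∞) for ν-a.e. x, and that all the expectations appearing below are finite. Then for every positive integer k: ∫_𝒳 −log μ(x) dν(x) ≤ ∫_Θ ( ∫_𝒳 −log p(θ, x) dν(x) ) dϱ(θ) − ∑_{i=1}^{2k−1} ((−1)^i / i) · ∫_𝒳 ( ∫_Θ (p(θ, x) − μ(x))^i dϱ(θ) ) / μ(x)^i dν(x). -/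
open MeasureTheory Finset

/-! For odd `n` the degree-`n` Taylor polynomial of `log (1 + t)` lies above it on `(-1, ∞)`:
the difference has derivative `t ^ n / (1 + t)`, which has the sign of `t`, so it is minimal at
`t = 0`. Applied with `1 + t = p θ x / μ x`, this bounds `-log (μ x)` pointwise; integrating over
`ϱ` and then over `ν`, and exchanging the order of the double integral by Fubini, gives the
theorem. -/

lemma hasDerivAt_sum_Icc_alternating (n : ℕ) (t : ℝ) :
    HasDerivAt (fun s : ℝ => ∑ i ∈ Icc 1 n, (-1) ^ (i + 1) * s ^ i / i)
      (∑ j ∈ range n, (-t) ^ j) t := by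
  induction n with
  | zero => simpa using hasDerivAt_const t (0 : ℝ)
  | succ n ih =>
    simp only [sum_Icc_succ_top (Nat.le_add_left 1 n), sum_range_succ]
    refine (ih.fun_add (((hasDerivAt_pow (n + 1) t).const_mul ((-1 : ℝ) ^ (n + 2))).div_const
      ((n + 1 : ℕ) : ℝ))).congr_deriv ?_
    rw [neg_pow, pow_add, Nat.add_sub_cancel]
    field_simp
    ring

noncomputable def logTaylorGap (n : ℕ) (t : ℝ) : ℝ :=
  ∑ i ∈ Icc 1 n, (-1) ^ (i + 1) * t ^ i / i - Real.log (1 + t)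

lemma logTaylorGap_at_zero (n : ℕ) : logTaylorGap n 0 = 0 := by
  simp +contextual [logTaylorGap, sum_eq_zero, zero_pow, Nat.one_le_iff_ne_zero]

lemma hasDerivAt_logTaylorGap {n : ℕ} (hn : Odd n) {t : ℝ} (ht : -1 < t) :
    HasDerivAt (logTaylorGap n) (t ^ n / (1 + t)) t := by
  have h1t : 1 + t ≠ 0 := by linarith
  refine ((hasDerivAt_sum_Icc_alternating n t).sub
    (((hasDerivAt_id t).const_add 1).log h1t)).congr_deriv ?_
  rw [id, eq_div_iff h1t, sub_mul, one_div_mul_cancel h1t,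
    show 1 + t = 1 - -t by ring, geom_sum_mul_neg, hn.neg_pow]
  ring

lemma logTaylorGap_nonneg {n : ℕ} (hn : Odd n) {t : ℝ} (ht : -1 < t) :
    0 ≤ logTaylorGap n t := by
  have hsub : ∀ {a b : ℝ}, -1 < a → Set.Icc a b ⊆ Set.Ioi (-1) :=
    fun ha s hs => ha.trans_le hs.1
  have hderiv : ∀ s ∈ Set.Ioi (-1 : ℝ), HasDerivAt (logTaylorGap n) (s ^ n / (1 + s)) s :=
    fun s hs => hasDerivAt_logTaylorGap hn hs
  have hcont : ∀ {a b : ℝ}, -1 < a → ContinuousOn (logTaylorGap n) (Set.Icc a b) :=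
    fun ha s hs => (hderiv s (hsub ha hs)).continuousAt.continuousWithinAt
  have hderivOn : ∀ {a b : ℝ}, -1 < a → ∀ s ∈ interior (Set.Icc a b),
      HasDerivWithinAt (logTaylorGap n) (s ^ n / (1 + s)) (interior (Set.Icc a b)) s :=
    fun ha s hs => (hderiv s (hsub ha (interior_subset hs))).hasDerivWithinAt
  rw [← logTaylorGap_at_zero n]
  rcases le_total 0 t with h0 | h0
  · refine monotoneOn_of_hasDerivWithinAt_nonneg (convex_Icc 0 t) (hcont (by norm_num))
      (hderivOn (by norm_num)) (fun s hs => ?_) (Set.left_mem_Icc.2 h0)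
      (Set.right_mem_Icc.2 h0) h0
    rw [interior_Icc] at hs
    have := hs.1
    positivity
  · refine antitoneOn_of_hasDerivWithinAt_nonpos (convex_Icc t 0) (hcont ht) (hderivOn ht)
      (fun s hs => ?_) (Set.left_mem_Icc.2 h0) (Set.right_mem_Icc.2 h0) h0
    rw [interior_Icc] at hs
    exact div_nonpos_of_nonpos_of_nonneg (hn.pow_nonpos hs.2.le) (by linarith [hs.1])

lemma neg_log_le_neg_log_sub_sum_of_odd {n : ℕ} (hn : Odd n) {a m : ℝ} (ha : 0 < a)
    (hm : 0 < m) :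
    -Real.log m ≤ -Real.log a - ∑ i ∈ Icc 1 n, ((-1) ^ i / i) * ((a - m) ^ i / m ^ i) := by
  have hgap := logTaylorGap_nonneg hn (t := (a - m) / m) (by
    rw [lt_div_iff₀ hm]; linarith)
  have hlog : Real.log (1 + (a - m) / m) = Real.log a - Real.log m := by
    rw [← Real.log_div ha.ne' hm.ne']
    congr 1
    field_simp
    ring
  have hsum : ∑ i ∈ Icc 1 n, (-1) ^ (i + 1) * ((a - m) / m) ^ i / i
      = -∑ i ∈ Icc 1 n, ((-1) ^ i / i) * ((a - m) ^ i / m ^ i) := by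
    rw [← sum_neg_distrib]
    refine sum_congr rfl fun i _ => ?_
    rw [div_pow, pow_succ]
    ring
  rw [logTaylorGap, hlog, hsum] at hgap
  linarith

lemma integral_le_integral_sub_sum_of_ae_le {α ι : Type*} [MeasurableSpace α] {μ : Measure α}
    {f g : α → ℝ} {h : ι → α → ℝ} {c : ι → ℝ} {s : Finset ι} (hf : Integrable f μ)
    (hg : Integrable g μ) (hh : ∀ i ∈ s, Integrable (h i) μ)
    (hle : ∀ᵐ x ∂μ, f x ≤ g x - ∑ i ∈ s, c i * h i x) :
    ∫ x, f x ∂μ ≤ ∫ x, g x ∂μ - ∑ i ∈ s, c i * ∫ x, h i x ∂μ := by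
  have hsum : Integrable (fun x => ∑ i ∈ s, c i * h i x) μ :=
    integrable_finsetSum _ fun i hi => (hh i hi).const_mul _
  calc ∫ x, f x ∂μ ≤ ∫ x, (g x - ∑ i ∈ s, c i * h i x) ∂μ :=
        integral_mono_ae hf (hg.sub hsum) hle
    _ = ∫ x, g x ∂μ - ∑ i ∈ s, c i * ∫ x, h i x ∂μ := by
        rw [integral_sub hg hsum, integral_finsetSum _ fun i hi => (hh i hi).const_mul _]
        simp only [integral_const_mul]

lemma neg_log_le_integral_neg_log_sub_sum_of_odd {Θ : Type*} [MeasurableSpace Θ]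
    {ϱ : Measure Θ} [IsProbabilityMeasure ϱ] {f : Θ → ℝ} (hf : ∀ θ, 0 < f θ) {m : ℝ}
    (hm : 0 < m) {n : ℕ} (hn : Odd n) (hlog : Integrable (fun θ => Real.log (f θ)) ϱ)
    (hpow : ∀ i ∈ Icc 1 n, Integrable (fun θ => (f θ - m) ^ i) ϱ) :
    -Real.log m ≤ ∫ θ, -Real.log (f θ) ∂ϱ
      - ∑ i ∈ Icc 1 n, ((-1) ^ i / i) * ((∫ θ, (f θ - m) ^ i ∂ϱ) / m ^ i) := by
  simpa only [integral_const, probReal_univ, one_smul, integral_div] using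
    integral_le_integral_sub_sum_of_ae_le (integrable_const (-Real.log m)) hlog.fun_neg
      (fun i hi => (hpow i hi).div_const (m ^ i))
      (ae_of_all ϱ fun θ => neg_log_le_neg_log_sub_sum_of_odd hn (hf θ) hm)

theorem cross_entropy_higher_order_bound_general
    {𝒳 Θ : Type*} [MeasurableSpace 𝒳] [MeasurableSpace Θ]
    (ν : Measure 𝒳) [IsProbabilityMeasure ν]
    (ϱ : Measure Θ) [IsProbabilityMeasure ϱ]
    (p : Θ → 𝒳 → ℝ)
    (hppos : ∀ θ x, 0 < p θ x)
    (k : ℕ) (hk : 0 < k)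
    (μ : 𝒳 → ℝ)
    (hμpos : ∀ᵐ x ∂ν, 0 < μ x)
    (hint2 : Integrable (fun q : Θ × 𝒳 => Real.log (p q.1 q.2)) (ϱ.prod ν))
    (hint3 : Integrable (fun x => Real.log (μ x)) ν)
    (hint4 : ∀ x, ∀ i ∈ Finset.Icc 1 (2 * k - 1),
      Integrable (fun θ => (p θ x - μ x) ^ i) ϱ)
    (hint5 : ∀ i ∈ Finset.Icc 1 (2 * k - 1),
      Integrable (fun x => (∫ θ, (p θ x - μ x) ^ i ∂ϱ) / μ x ^ i) ν)
    (hint6 : ∀ x, Integrable (fun θ => Real.log (p θ x)) ϱ) :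
    ∫ x, -Real.log (μ x) ∂ν
      ≤ (∫ θ, (∫ x, -Real.log (p θ x) ∂ν) ∂ϱ)
        - ∑ i ∈ Finset.Icc 1 (2 * k - 1),
            ((-1 : ℝ) ^ i / (i : ℝ)) *
              ∫ x, (∫ θ, (p θ x - μ x) ^ i ∂ϱ) / μ x ^ i ∂ν := by
  have hodd : Odd (2 * k - 1) := ⟨k - 1, by omega⟩
  have hpointwise : ∀ᵐ x ∂ν, -Real.log (μ x) ≤ ∫ θ, -Real.log (p θ x) ∂ϱ
      - ∑ i ∈ Icc 1 (2 * k - 1), ((-1) ^ i / i) * ((∫ θ, (p θ x - μ x) ^ i ∂ϱ) / μ x ^ i) := by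
    filter_upwards [hμpos] with x hx
    exact neg_log_le_integral_neg_log_sub_sum_of_odd (hppos · x) hx hodd (hint6 x) (hint4 x)
  rw [integral_integral_swap hint2.fun_neg]
  exact integral_le_integral_sub_sum_of_ae_le hint3.fun_neg hint2.fun_neg.integral_prod_right
    hint5 hpointwise

/-- Let `ν` be a probability measure on `𝒳` (the data distribution), `ϱ` a
probability measure on `Θ` (the distribution over parameters), and `p : Θ × 𝒳 → (0,∞)` a
measurable conditional model density. Define `μ(x) = ∫ p(θ,x) dϱ(θ)` and assume `μ(x) > 0`
for `ν`-a.e. `x` and that all the relevant expectations are finite. Then for every `k ≥ 1`: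
`∫ −log μ(x) dν(x) ≤ ∫ (∫ −log p(θ,x) dν(x)) dϱ(θ)
  − ∑_{i=1}^{2k−1} ((−1)^i/i)·∫ (∫ (p(θ,x) − μ(x))^i dϱ(θ))/μ(x)^i dν(x)`. -/
theorem cross_entropy_higher_order_bound
    {𝒳 Θ : Type*} [MeasurableSpace 𝒳] [MeasurableSpace Θ]
    (ν : Measure 𝒳) [IsProbabilityMeasure ν]
    (ϱ : Measure Θ) [IsProbabilityMeasure ϱ]
    (p : Θ → 𝒳 → ℝ) (hp : Measurable (Function.uncurry p))
    (hppos : ∀ θ x, 0 < p θ x)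
    (k : ℕ) (hk : 0 < k)
    (μ : 𝒳 → ℝ) (hμ : ∀ x, μ x = ∫ θ, p θ x ∂ϱ)
    (hμpos : ∀ᵐ x ∂ν, 0 < μ x)
    (hint1 : ∀ x, Integrable (fun θ => p θ x) ϱ)
    (hint2 : Integrable (fun q : Θ × 𝒳 => Real.log (p q.1 q.2)) (ϱ.prod ν))
    (hint3 : Integrable (fun x => Real.log (μ x)) ν)
    (hint4 : ∀ x, ∀ i ∈ Finset.Icc 1 (2 * k - 1),
      Integrable (fun θ => (p θ x - μ x) ^ i) ϱ)
    (hint5 : ∀ i ∈ Finset.Icc 1 (2 * k - 1),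
      Integrable (fun x => (∫ θ, (p θ x - μ x) ^ i ∂ϱ) / μ x ^ i) ν)
    (hint6 : ∀ x, Integrable (fun θ => Real.log (p θ x)) ϱ) :
    ∫ x, -Real.log (μ x) ∂ν
      ≤ (∫ θ, (∫ x, -Real.log (p θ x) ∂ν) ∂ϱ)
        - ∑ i ∈ Finset.Icc 1 (2 * k - 1),
            ((-1 : ℝ) ^ i / (i : ℝ)) *
              ∫ x, (∫ θ, (p θ x - μ x) ^ i ∂ϱ) / μ x ^ i ∂ν :=
  cross_entropy_higher_order_bound_general ν ϱ p hppos k hk μ hμpos hint2 hint3 hint4 hint5 hint6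
end

section
/- Let (Ω, Σ, P) be a probability space, let k and n be positive integers, let X₁, …, Xₙ : Ω → (0,∞) be independent, identically distributed positive random variables with common mean m = E[X₁] ∈ (0,∞), and let X̄ = (1/n)·∑_{i=1}^{n} Xᵢ denote the sample mean. Assume log(X̄), X̄^j, and X̄^{−j} are integrable for 1 ≤ j ≤ 2k−1. Then E[ ∑_{j=1}^{2k−1} ( 1/j + b_{k,j} · X̄^j / m^j ) + log(X̄) ] ≤ log(m) ≤ E[ −∑_{j=1}^{2k−1} ( 1/j + b_{k,j} · m^j / X̄^j ) + log(X̄) ]. -/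
/-!
For odd `N`, the function `F(t) = ∑_{j=1}^N (1/j + b_{k,j} t^j) + log t` has derivative
`(1 - t)^N / t`, which is nonnegative on `(0, 1]` and nonpositive on `[1, ∞)`; and `F(1) = 0`
because `∑_{j=1}^N (-1)^j C(N,j) / j = -∑_{j=1}^N 1/j`. Hence `F ≤ 0` on `(0, ∞)`. Evaluating
at `t = X̄/m` and at `t = m/X̄` gives both bounds pointwise, and integrating them gives the claim.
-/

open MeasureTheory ProbabilityTheory Finset

theorem sum_Icc_neg_one_pow_mul_choose_mul_pow (N : ℕ) (x : ℝ) :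
    ∑ j ∈ Icc 1 N, (-1 : ℝ) ^ j * N.choose j * x ^ j = (1 - x) ^ N - 1 := by
  have h := add_pow (-x) 1 N
  rw [range_eq_Ico, sum_eq_sum_Ico_succ_bot (Nat.zero_lt_succ N), zero_add, Nat.succ_eq_add_one,
    Ico_add_one_right_eq_Icc] at h
  simp only [one_pow, mul_one, pow_zero, Nat.choose_zero_right, Nat.cast_one] at h
  rw [← neg_add_eq_sub x 1, h, add_sub_cancel_left]
  exact sum_congr rfl fun j _ => by rw [neg_pow]; ring

theorem sum_Icc_neg_one_pow_div_mul_choose (N : ℕ) :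
    ∑ j ∈ Icc 1 N, (-1 : ℝ) ^ j / j * N.choose j = -∑ j ∈ Icc 1 N, (1 / j : ℝ) := by
  induction N with
  | zero => simp
  | succ N ih =>
    have hpascal : ∀ j ∈ Icc 1 (N + 1), (-1 : ℝ) ^ j / j * (N + 1).choose j
        = (-1 : ℝ) ^ j / j * N.choose j + (-1 : ℝ) ^ j * (N + 1).choose j / (N + 1) := by
      intro j hj
      obtain ⟨i, rfl⟩ : ∃ i, j = i + 1 := ⟨j - 1, by grind⟩
      have h : ((N : ℝ) + 1) * N.choose i = (N + 1).choose (i + 1) * (i + 1) := by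
        exact_mod_cast Nat.add_one_mul_choose_eq N i
      rw [Nat.choose_succ_succ'] at h ⊢
      push_cast at h ⊢
      field_simp
      linear_combination h
    have halt : ∑ j ∈ Icc 1 (N + 1), (-1 : ℝ) ^ j * (N + 1).choose j = -1 := by
      simpa using sum_Icc_neg_one_pow_mul_choose_mul_pow (N + 1) 1
    rw [sum_congr rfl hpascal, sum_add_distrib, ← sum_div, halt,
      sum_Icc_succ_top (Nat.le_add_left 1 N), sum_Icc_succ_top (Nat.le_add_left 1 N),
      Nat.choose_succ_self, ih]
    push_cast
    ring

/-- This is `log t + ∑_{j=1}^N (1 - t)^j / j`, the remainder of the degree-`N` Taylor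
expansion of `log` at `1`, written in the monomial basis. -/
noncomputable def logTaylorRemainder (N : ℕ) (t : ℝ) : ℝ :=
  ∑ j ∈ Icc 1 N, (1 / (j : ℝ) + (-1 : ℝ) ^ j / j * N.choose j * t ^ j) + Real.log t

theorem logTaylorRemainder_one (N : ℕ) : logTaylorRemainder N 1 = 0 := by
  simp only [logTaylorRemainder, one_pow, mul_one, Real.log_one, add_zero, sum_add_distrib,
    sum_Icc_neg_one_pow_div_mul_choose, add_neg_cancel]

theorem hasDerivAt_logTaylorRemainder (N : ℕ) {x : ℝ} (hx : 0 < x) :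
    HasDerivAt (logTaylorRemainder N) ((1 - x) ^ N / x) x := by
  have hsum : HasDerivAt
      (fun t => ∑ j ∈ Icc 1 N, (1 / (j : ℝ) + (-1 : ℝ) ^ j / j * N.choose j * t ^ j))
      (∑ j ∈ Icc 1 N, (-1 : ℝ) ^ j / j * N.choose j * (j * x ^ (j - 1))) x :=
    HasDerivAt.fun_sum fun j _ => ((hasDerivAt_pow j x).const_mul _).const_add _
  refine (hsum.add (Real.hasDerivAt_log hx.ne')).congr_deriv ?_
  have hterm : ∀ j ∈ Icc 1 N, (-1 : ℝ) ^ j / j * N.choose j * (j * x ^ (j - 1))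
      = (-1 : ℝ) ^ j * N.choose j * x ^ j / x := by
    intro j hj
    obtain ⟨i, rfl⟩ : ∃ i, j = i + 1 := ⟨j - 1, by grind⟩
    rw [add_tsub_cancel_right]
    field_simp
    ring
  rw [sum_congr rfl hterm, ← sum_div, sum_Icc_neg_one_pow_mul_choose_mul_pow]
  field_simp
  ring

theorem logTaylorRemainder_nonpos {N : ℕ} (hN : Odd N) {t : ℝ} (ht : 0 < t) :
    logTaylorRemainder N t ≤ 0 := by
  have hcont : ContinuousOn (logTaylorRemainder N) (Set.Ioi 0) := fun x hx =>
    (hasDerivAt_logTaylorRemainder N hx).continuousAt.continuousWithinAt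
  have hderiv : ∀ x : ℝ, 0 < x → ∀ s,
      HasDerivWithinAt (logTaylorRemainder N) ((1 - x) ^ N / x) s x := fun x hx s =>
    (hasDerivAt_logTaylorRemainder N hx).hasDerivWithinAt
  rw [← logTaylorRemainder_one N]
  rcases le_total t 1 with hle | hle
  · have hmono : MonotoneOn (logTaylorRemainder N) (Set.Ioc 0 1) := by
      refine monotoneOn_of_hasDerivWithinAt_nonneg (f' := fun x => (1 - x) ^ N / x)
        (convex_Ioc 0 1) (hcont.mono Set.Ioc_subset_Ioi_self) ?_ ?_
      all_goals
        rw [interior_Ioc]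
        intro x hx
      · exact hderiv x hx.1 _
      · exact div_nonneg (pow_nonneg (by linarith [hx.2]) N) hx.1.le
    exact hmono ⟨ht, hle⟩ ⟨one_pos, le_rfl⟩ hle
  · have hanti : AntitoneOn (logTaylorRemainder N) (Set.Ici 1) := by
      refine antitoneOn_of_hasDerivWithinAt_nonpos (f' := fun x => (1 - x) ^ N / x)
        (convex_Ici 1) (hcont.mono (Set.Ici_subset_Ioi.mpr one_pos)) ?_ ?_
      all_goals
        rw [interior_Ici]
        intro x hx
      · exact hderiv x (one_pos.trans hx) _
      · exact div_nonpos_of_nonpos_of_nonneg (hN.pow_nonpos (by linarith [hx.out]))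
          (one_pos.trans hx).le
    exact hanti (Set.mem_Ici.2 le_rfl) hle hle

theorem sum_add_log_le_log {N : ℕ} (hN : Odd N) {x y : ℝ} (hx : 0 < x) (hy : 0 < y) :
    ∑ j ∈ Icc 1 N, (1 / (j : ℝ) + ((-1 : ℝ) ^ j / (j : ℝ)) * (N.choose j : ℝ) * (x ^ j / y ^ j))
      + Real.log x ≤ Real.log y := by
  have h := logTaylorRemainder_nonpos hN (div_pos hx hy)
  simp only [logTaylorRemainder, div_pow, Real.log_div hx.ne' hy.ne'] at h
  linarith

theorem log_mean_sample_mean_bounds_general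
    {Ω : Type*} [MeasurableSpace Ω] (P : Measure Ω) [IsProbabilityMeasure P]
    (k n : ℕ) (hk : 0 < k) (hn : 0 < n)
    (X : Fin n → Ω → ℝ)
    (hpos : ∀ i ω, 0 < X i ω)
    (m : ℝ) (hmpos : 0 < m)
    (Xbar : Ω → ℝ) (hXbar : ∀ ω, Xbar ω = (∑ i, X i ω) / (n : ℝ))
    (hlogint : Integrable (fun ω => Real.log (Xbar ω)) P)
    (hpow : ∀ j ∈ Finset.Icc 1 (2 * k - 1), Integrable (fun ω => Xbar ω ^ j) P)
    (hpowneg : ∀ j ∈ Finset.Icc 1 (2 * k - 1),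
      Integrable (fun ω => Xbar ω ^ (-(j : ℤ))) P) :
    (∫ ω, (∑ j ∈ Finset.Icc 1 (2 * k - 1),
          (1 / (j : ℝ) + ((-1 : ℝ) ^ j / (j : ℝ)) * ((2 * k - 1).choose j : ℝ) *
            (Xbar ω ^ j / m ^ j))) + Real.log (Xbar ω) ∂P
      ≤ Real.log m) ∧
    (Real.log m
      ≤ ∫ ω, (-∑ j ∈ Finset.Icc 1 (2 * k - 1),
          (1 / (j : ℝ) + ((-1 : ℝ) ^ j / (j : ℝ)) * ((2 * k - 1).choose j : ℝ) *
            (m ^ j / Xbar ω ^ j))) + Real.log (Xbar ω) ∂P) := by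
  have hodd : Odd (2 * k - 1) := ⟨k - 1, by omega⟩
  have hXbar_pos : ∀ ω, 0 < Xbar ω := fun ω => by
    rw [hXbar]
    exact div_pos (sum_pos (fun i _ => hpos i ω) ⟨⟨0, hn⟩, mem_univ _⟩) (Nat.cast_pos.2 hn)
  constructor
  · refine (integral_mono ?_ (integrable_const _)
      fun ω => sum_add_log_le_log hodd (hXbar_pos ω) hmpos).trans_eq (by simp)
    refine (integrable_finsetSum _ fun j hj => ?_).add hlogint
    exact (integrable_const _).add (((hpow j hj).div_const _).const_mul _)
  · refine (by simp : Real.log m = ∫ _, Real.log m ∂P).trans_le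
      (integral_mono (integrable_const _) ?_
        fun ω => by linarith [sum_add_log_le_log hodd hmpos (hXbar_pos ω)])
    refine (integrable_finsetSum _ fun j hj => ?_).neg.add hlogint
    have hinv : Integrable (fun ω => m ^ j / Xbar ω ^ j) P := by
      simpa [div_eq_mul_inv] using (hpowneg j hj).const_mul (m ^ j)
    exact (integrable_const _).add (hinv.const_mul _)

/-- Let `k, n ≥ 1`, let `X₁, …, Xₙ : Ω → (0,∞)` be i.i.d. positive random
variables with common mean `m = E[X₁] ∈ (0,∞)`, and let `X̄ = (1/n)·∑ᵢ Xᵢ` be the sample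
mean. Assume `log(X̄)`, `X̄^j`, `X̄^{−j}` are integrable for `1 ≤ j ≤ 2k−1`. Then, with
`b_{k,j} = ((−1)^j/j)·C(2k−1,j)`,
`E[∑_{j=1}^{2k−1} (1/j + b_{k,j}·X̄^j/m^j) + log(X̄)] ≤ log(m)
  ≤ E[−∑_{j=1}^{2k−1} (1/j + b_{k,j}·m^j/X̄^j) + log(X̄)]`. -/
theorem log_mean_sample_mean_bounds
    {Ω : Type*} [MeasurableSpace Ω] (P : Measure Ω) [IsProbabilityMeasure P]
    (k n : ℕ) (hk : 0 < k) (hn : 0 < n)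
    (X : Fin n → Ω → ℝ)
    (hmeas : ∀ i, Measurable (X i))
    (hpos : ∀ i ω, 0 < X i ω)
    (hindep : iIndepFun X P)
    (hident : ∀ i, IdentDistrib (X i) (X ⟨0, hn⟩) P P)
    (hX0int : Integrable (X ⟨0, hn⟩) P)
    (m : ℝ) (hm : m = ∫ ω, X ⟨0, hn⟩ ω ∂P) (hmpos : 0 < m)
    (Xbar : Ω → ℝ) (hXbar : ∀ ω, Xbar ω = (∑ i, X i ω) / (n : ℝ))
    (hlogint : Integrable (fun ω => Real.log (Xbar ω)) P)
    (hpow : ∀ j ∈ Finset.Icc 1 (2 * k - 1), Integrable (fun ω => Xbar ω ^ j) P)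
    (hpowneg : ∀ j ∈ Finset.Icc 1 (2 * k - 1),
      Integrable (fun ω => Xbar ω ^ (-(j : ℤ))) P) :
    (∫ ω, (∑ j ∈ Finset.Icc 1 (2 * k - 1),
          (1 / (j : ℝ) + ((-1 : ℝ) ^ j / (j : ℝ)) * ((2 * k - 1).choose j : ℝ) *
            (Xbar ω ^ j / m ^ j))) + Real.log (Xbar ω) ∂P
      ≤ Real.log m) ∧
    (Real.log m
      ≤ ∫ ω, (-∑ j ∈ Finset.Icc 1 (2 * k - 1),
          (1 / (j : ℝ) + ((-1 : ℝ) ^ j / (j : ℝ)) * ((2 * k - 1).choose j : ℝ) *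
            (m ^ j / Xbar ω ^ j))) + Real.log (Xbar ω) ∂P) :=
  log_mean_sample_mean_bounds_general P k n hk hn X hpos m hmpos Xbar hXbar hlogint hpow hpowneg
end
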